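/- arXiv:1306.3260 — 11 statements merged into one kernel-verified Lean document; each statement's English description precedes it below -/
import Mathlib

section
/- Let M be a monoid and suppose x, y ∈ M satisfy x·y = 1 and y·x ≠ 1. Then the submonoid of M generated by {x, y} is isomorphic (as a monoid) to the bicyclic monoid B. -/
/-!
Given `x * y = 1`, a left inverse of `x` must be `y` and a right inverse of `y` must be `x`, so
`y * x ≠ 1` means that neither exists; in particular `y ^ a * x ^ b = 1` only for `a = b = 0`. As
`y ^ k` is left- and `x ^ k` right-cancellable, the elements `y ^ m * x ^ n` are then pairwise
distinct. Every element of `B` has the form `x̄ ^ m * x ^ n`, so the morphism `B →* M` with `x ↦ x`,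
`x̄ ↦ y` is injective, and its range is the submonoid generated by `x` and `y`.
-/

namespace Paper

/-- Defining relation of the bicyclic monoid: the word `x·x̄` is identified with the
empty word. The generator `x` is `FreeMonoid.of 0`, and `x̄` is `FreeMonoid.of 1`. -/
def BicyclicRel : FreeMonoid (Fin 2) → FreeMonoid (Fin 2) → Prop :=
  fun a b => a = FreeMonoid.of 0 * FreeMonoid.of 1 ∧ b = 1

/-- The bicyclic monoid `B`: the quotient of the free monoid on two generators by the
smallest monoid congruence identifying `x·x̄` with the empty word. -/
def Bicyclic : Type := (conGen BicyclicRel).Quotient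

instance : Monoid Bicyclic := inferInstanceAs (Monoid (conGen BicyclicRel).Quotient)

theorem _root_.PresentedMonoid.mrange_lift {α M : Type*} [Monoid M]
    {rels : FreeMonoid α → FreeMonoid α → Prop} (f : α → M)
    (h : ∀ a b, rels a b → FreeMonoid.lift f a = FreeMonoid.lift f b) :
    MonoidHom.mrange (PresentedMonoid.lift f h) = Submonoid.closure (Set.range f) := by
  rw [MonoidHom.mrange_eq_map, ← PresentedMonoid.closure_range_of, MonoidHom.map_mclosure,
    ← Set.range_comp]
  rfl

section RightInverse

variable {M : Type*} [Monoid M] {x y : M}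

theorem eq_zero_of_pow_mul_pow_eq_one (hxy : x * y = 1) (hyx : y * x ≠ 1) {a b : ℕ}
    (h : y ^ a * x ^ b = 1) : a = 0 ∧ b = 0 := by
  have no_right_inv : ∀ z, y * z ≠ 1 := fun z hz ↦ hyx <| by
    rwa [left_inv_eq_right_inv hxy hz]
  have no_left_inv : ∀ z, z * x ≠ 1 := fun z hz ↦ hyx <| by
    rwa [← left_inv_eq_right_inv hz hxy]
  rcases a with _ | a
  · rcases b with _ | b
    · exact ⟨rfl, rfl⟩
    · exact absurd (by simpa [pow_succ] using h) (no_left_inv (x ^ b))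
  · exact absurd (by rwa [pow_succ', mul_assoc] at h) (no_right_inv _)

theorem pow_mul_pow_injective (hxy : x * y = 1) (hyx : y * x ≠ 1) {m n p q : ℕ}
    (h : y ^ m * x ^ n = y ^ p * x ^ q) : m = p ∧ n = q := by
  wlog hmp : m ≤ p generalizing m n p q
  · exact (this h.symm (le_of_not_ge hmp)).imp Eq.symm Eq.symm
  obtain ⟨d, rfl⟩ := Nat.exists_eq_add_of_le hmp
  have cancel_left : IsLeftRegular (y ^ m) :=
    isLeftRegular_of_mul_eq_one (pow_mul_pow_eq_one m hxy)
  rcases le_total n q with hnq | hqn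
  · obtain ⟨e, rfl⟩ := Nat.exists_eq_add_of_le' hnq
    have cancel_right : IsRightRegular (x ^ n) :=
      isRightRegular_of_mul_eq_one (pow_mul_pow_eq_one n hxy)
    have hde : y ^ d * x ^ e = 1 := cancel_left <| cancel_right <| by
      simpa only [pow_add, mul_assoc, one_mul, mul_one] using h.symm
    obtain ⟨rfl, rfl⟩ := eq_zero_of_pow_mul_pow_eq_one hxy hyx hde
    simp
  · obtain ⟨e, rfl⟩ := Nat.exists_eq_add_of_le' hqn
    have cancel_right : IsRightRegular (x ^ q) :=
      isRightRegular_of_mul_eq_one (pow_mul_pow_eq_one q hxy)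
    have hxe : x ^ e = y ^ d := cancel_left <| cancel_right <| by
      simpa only [pow_add, mul_assoc] using h
    have hde : y ^ 0 * x ^ (d + e) = 1 := by
      rw [pow_zero, one_mul, pow_add, hxe, pow_mul_pow_eq_one d hxy]
    obtain ⟨-, hde⟩ := eq_zero_of_pow_mul_pow_eq_one hxy hyx hde
    obtain ⟨rfl, rfl⟩ : d = 0 ∧ e = 0 := by omega
    simp

end RightInverse

namespace Bicyclic

-- `Bicyclic` is definitionally `PresentedMonoid BicyclicRel`, whose API is used below.

def x : Bicyclic := PresentedMonoid.of BicyclicRel 0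

def xbar : Bicyclic := PresentedMonoid.of BicyclicRel 1

theorem x_mul_xbar : x * xbar = 1 :=
  PresentedMonoid.mk_eq_mk_of_rel (rels := BicyclicRel) ⟨rfl, rfl⟩

theorem closure_x_xbar : Submonoid.closure {x, xbar} = ⊤ := by
  have generators : PresentedMonoid.of BicyclicRel = ![x, xbar] := by
    ext i; fin_cases i <;> rfl
  rw [← Matrix.range_cons_cons_empty x xbar ![]]
  exact generators ▸ PresentedMonoid.closure_range_of BicyclicRel

theorem exists_eq_xbar_pow_mul_x_pow (w : Bicyclic) : ∃ m n : ℕ, w = xbar ^ m * x ^ n := by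
  have hw : w ∈ Submonoid.closure {x, xbar} := closure_x_xbar ▸ Submonoid.mem_top w
  induction hw using Submonoid.closure_induction_left with
  | one => exact ⟨0, 0, by simp⟩
  | mul_left g hg w _ ih =>
    obtain ⟨m, n, rfl⟩ := ih
    rcases hg with rfl | rfl
    · rcases m with _ | m
      · exact ⟨0, n + 1, by simp [pow_succ']⟩
      · exact ⟨m, n, by rw [pow_succ', ← mul_assoc, ← mul_assoc, x_mul_xbar, one_mul]⟩
    · exact ⟨m + 1, n, by rw [pow_succ', mul_assoc]⟩

variable {M : Type*} [Monoid M] {x y : M}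

def lift (hxy : x * y = 1) : Bicyclic →* M :=
  PresentedMonoid.lift ![x, y] (by rintro _ _ ⟨rfl, rfl⟩; simpa using hxy)

theorem lift_xbar_pow_mul_x_pow (hxy : x * y = 1) (m n : ℕ) :
    lift hxy (xbar ^ m * Bicyclic.x ^ n) = y ^ m * x ^ n := by
  rw [map_mul, map_pow, map_pow]
  rfl

theorem lift_injective (hxy : x * y = 1) (hyx : y * x ≠ 1) : Function.Injective (lift hxy) := by
  intro v w hvw
  obtain ⟨m, n, rfl⟩ := exists_eq_xbar_pow_mul_x_pow v
  obtain ⟨p, q, rfl⟩ := exists_eq_xbar_pow_mul_x_pow w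
  rw [lift_xbar_pow_mul_x_pow, lift_xbar_pow_mul_x_pow] at hvw
  obtain ⟨rfl, rfl⟩ := pow_mul_pow_injective hxy hyx hvw
  rfl

theorem mrange_lift (hxy : x * y = 1) :
    MonoidHom.mrange (lift hxy) = Submonoid.closure {x, y} :=
  (PresentedMonoid.mrange_lift ![x, y] _).trans (by rw [Matrix.range_cons_cons_empty])

end Bicyclic

/-- If `x·y = 1` and `y·x ≠ 1` in a monoid `M`, then the submonoid of `M`
generated by `{x, y}` is isomorphic to the bicyclic monoid. -/
theorem stmt0 (M : Type*) [Monoid M] (x y : M) (hxy : x * y = 1) (hyx : y * x ≠ 1) :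
    Nonempty (Submonoid.closure {x, y} ≃* Bicyclic) :=
  ⟨((MulEquiv.ofLeftInverse' (Bicyclic.lift hxy)
      (Function.leftInverse_invFun (Bicyclic.lift_injective hxy hyx))).trans
    (MulEquiv.submonoidCongr (Bicyclic.mrange_lift hxy))).symm⟩

end Paper
end

section
/- For every monoid M, exactly one of the following holds: (1) M is an FRI-monoid; (2) there exist a finitely generated submonoid N ⊆ M and infinite subsets S ⊆ R(N) and S' ⊆ L(N) such that no two distinct elements of S have a right inverse in N in common, and no two distinct elements of S' have a left inverse in N in common. -/
/-!
If `M` is not Dedekind-finite, some `a * b = 1` has `b * a ≠ 1`. Then two distinct powers of `a`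
never share a right inverse: `a ^ m * c = 1 = a ^ n * c` with `m < n` forces `a ^ (n - m) = 1`,
making `a` a unit and hence `b * a = 1`. Dually for the powers of `b`, so `Submonoid.closure {a, b}`
witnesses (2). If `M` is Dedekind-finite, every right-invertible element of a submonoid is a unit,
so inverses are unique and any finitely generated `N` with `R(N)` infinite witnesses (2) with
`S = S' = R(N)`. Conversely (2) makes `R(N)` infinite, so (1) and (2) exclude each other.
-/

namespace Paper

/-- `M` is an FRI-monoid: every finitely generated submonoid `N` of `M` has only
finitely many right-invertible elements. -/
def IsFRI (M : Type*) [Monoid M] : Prop :=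
  ∀ N : Submonoid M, N.FG → {a : N | ∃ b : N, a * b = 1}.Finite

/-- Condition (2) of the theorem, stated inside the monoid `N` itself. -/
def HasInfiniteInverseSeparatedSets (K : Type*) [Monoid K] : Prop :=
  ∃ S S' : Set K,
    S.Infinite ∧ S ⊆ {a : K | ∃ b : K, a * b = 1} ∧
    (∀ a ∈ S, ∀ a' ∈ S, a ≠ a' → ¬∃ b : K, a * b = 1 ∧ a' * b = 1) ∧
    S'.Infinite ∧ S' ⊆ {a : K | ∃ b : K, b * a = 1} ∧
    (∀ a ∈ S', ∀ a' ∈ S', a ≠ a' → ¬∃ b : K, b * a = 1 ∧ b * a' = 1)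

section
variable {K : Type*} [Monoid K] {a b c : K} {m n : ℕ}

theorem mul_eq_one_symm_of_pow_eq_one (hab : a * b = 1) (ha : a ^ n = 1) (hn : n ≠ 0) :
    b * a = 1 :=
  (IsUnit.of_pow_eq_one ha hn).isRegular.left.mul_eq_one_symm hab

theorem eq_of_pow_mul_eq_one_of_mul_ne_one (hab : a * b = 1) (hba : b * a ≠ 1)
    (hm : a ^ m * c = 1) (hn : a ^ n * c = 1) : m = n := by
  wlog hmn : m ≤ n generalizing m n
  · exact (this hn hm (by omega)).symm
  have hpow : a ^ (n - m) = 1 :=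
    calc a ^ (n - m) = a ^ (n - m) * (a ^ m * c) := by rw [hm, mul_one]
      _ = a ^ n * c := by rw [← mul_assoc, ← pow_add, Nat.sub_add_cancel hmn]
      _ = 1 := hn
  by_contra hne
  exact hba (mul_eq_one_symm_of_pow_eq_one hab hpow (by omega))

theorem eq_of_mul_pow_eq_one_of_mul_ne_one (hab : a * b = 1) (hba : b * a ≠ 1)
    (hm : c * b ^ m = 1) (hn : c * b ^ n = 1) : m = n := by
  open MulOpposite in
  refine eq_of_pow_mul_eq_one_of_mul_ne_one (a := op b) (b := op a) (c := op c) ?_ ?_ ?_ ?_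
  · rw [← op_mul, hab, op_one]
  · rwa [← op_mul, ne_eq, op_eq_one_iff]
  · rw [← op_pow, ← op_mul, hm, op_one]
  · rw [← op_pow, ← op_mul, hn, op_one]

theorem pow_injective_of_mul_ne_one (hab : a * b = 1) (hba : b * a ≠ 1) :
    Function.Injective (a ^ · : ℕ → K) := fun m n (h : a ^ m = a ^ n) =>
  eq_of_pow_mul_eq_one_of_mul_ne_one hab hba (pow_mul_pow_eq_one m hab)
    (h ▸ pow_mul_pow_eq_one m hab)

theorem pow_injective_of_mul_ne_one' (hab : a * b = 1) (hba : b * a ≠ 1) :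
    Function.Injective (b ^ · : ℕ → K) := fun m n (h : b ^ m = b ^ n) =>
  eq_of_mul_pow_eq_one_of_mul_ne_one hab hba (pow_mul_pow_eq_one m hab)
    (h ▸ pow_mul_pow_eq_one m hab)

theorem hasInfiniteInverseSeparatedSets_of_mul_ne_one (hab : a * b = 1) (hba : b * a ≠ 1) :
    HasInfiniteInverseSeparatedSets K := by
  refine ⟨Set.range (a ^ ·), Set.range (b ^ ·),
    Set.infinite_range_of_injective (pow_injective_of_mul_ne_one hab hba), ?_, ?_,
    Set.infinite_range_of_injective (pow_injective_of_mul_ne_one' hab hba), ?_, ?_⟩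
  · rintro _ ⟨n, rfl⟩
    exact ⟨b ^ n, pow_mul_pow_eq_one n hab⟩
  · rintro _ ⟨m, rfl⟩ _ ⟨n, rfl⟩ hne ⟨c, hm, hn⟩
    exact hne (congrArg _ (eq_of_pow_mul_eq_one_of_mul_ne_one hab hba hm hn))
  · rintro _ ⟨n, rfl⟩
    exact ⟨a ^ n, pow_mul_pow_eq_one n hab⟩
  · rintro _ ⟨m, rfl⟩ _ ⟨n, rfl⟩ hne ⟨c, hm, hn⟩
    exact hne (congrArg _ (eq_of_mul_pow_eq_one_of_mul_ne_one hab hba hm hn))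

theorem hasInfiniteInverseSeparatedSets_of_isDedekindFiniteMonoid [IsDedekindFiniteMonoid K]
    (h : {a : K | ∃ b : K, a * b = 1}.Infinite) : HasInfiniteInverseSeparatedSets K := by
  refine ⟨_, _, h, subset_rfl, ?_, h, ?_, ?_⟩
  · rintro a - a' - hne ⟨c, hac, ha'c⟩
    exact hne (left_inv_eq_right_inv ha'c (mul_eq_one_symm hac)).symm
  · rintro a ⟨b, hab⟩
    exact ⟨b, mul_eq_one_symm hab⟩
  · rintro a - a' - hne ⟨c, hca, hca'⟩
    exact hne (left_inv_eq_right_inv (mul_eq_one_symm hca) hca')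

end

theorem exists_fg_hasInfiniteInverseSeparatedSets_of_not_isFRI {M : Type*} [Monoid M]
    (hM : ¬IsFRI M) : ∃ N : Submonoid M, N.FG ∧ HasInfiniteInverseSeparatedSets N := by
  by_cases hDF : IsDedekindFiniteMonoid M
  · simp only [IsFRI, not_forall] at hM
    obtain ⟨N, hN, hR⟩ := hM
    exact ⟨N, hN, hasInfiniteInverseSeparatedSets_of_isDedekindFiniteMonoid hR⟩
  · simp only [isDedekindFiniteMonoid_iff, not_forall] at hDF
    obtain ⟨a, b, hab, hba⟩ := hDF
    let N := Submonoid.closure {a, b}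
    let α : N := ⟨a, Submonoid.subset_closure (by simp)⟩
    let β : N := ⟨b, Submonoid.subset_closure (by simp)⟩
    refine ⟨N, (Submonoid.fg_iff _).2 ⟨{a, b}, rfl, Set.toFinite _⟩,
      hasInfiniteInverseSeparatedSets_of_mul_ne_one (a := α) (b := β) (Subtype.ext hab)
        fun h => hba (congrArg Subtype.val h)⟩

/-- For every monoid `M`, exactly one of the following holds:
(1) `M` is an FRI-monoid; (2) there are a finitely generated submonoid `N ⊆ M` and
infinite subsets `S ⊆ R(N)`, `S' ⊆ L(N)` such that no two distinct elements of `S`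
share a right inverse in `N` and no two distinct elements of `S'` share a left
inverse in `N`. -/
theorem stmt2 (M : Type*) [Monoid M] :
    Xor' (IsFRI M)
      (∃ N : Submonoid M, N.FG ∧
        ∃ S S' : Set N,
          S.Infinite ∧ S ⊆ {a : N | ∃ b : N, a * b = 1} ∧
          (∀ a ∈ S, ∀ a' ∈ S, a ≠ a' → ¬∃ b : N, a * b = 1 ∧ a' * b = 1) ∧
          S'.Infinite ∧ S' ⊆ {a : N | ∃ b : N, b * a = 1} ∧
          (∀ a ∈ S', ∀ a' ∈ S', a ≠ a' → ¬∃ b : N, b * a = 1 ∧ b * a' = 1)) := by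
  refine xor_iff_iff_not.2
    ⟨?_, not_imp_comm.1 exists_fg_hasInfiniteInverseSeparatedSets_of_not_isFRI⟩
  rintro hFRI ⟨N, hN, S, -, hS, hSR, -⟩
  exact hS ((hFRI N hN).subset hSR)

end Paper
end

section
/- Let N be a monoid whose set R(N) = {a ∈ N : ∃ b ∈ N, ab = 1} of right-invertible elements is finite. Then J(N) = {a ∈ N : ∃ b, c ∈ N, b·a·c = 1} is a finite subgroup of N, i.e. a finite submonoid in which every element has a two-sided inverse lying in J(N). -/
/-!
Right multiplication by a right-invertible element `a` is injective and maps the finite set of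
right-invertible elements into itself, so it is onto; in particular `c * a = 1` for some `c`, and
`N` is Dedekind-finite. In a Dedekind-finite monoid a factor of a unit is a unit, so `J(N)` is
exactly the group of units, which lies in the finite set of right-invertible elements.
-/

namespace Paper

/-- `J(M) = {a ∈ M : ∃ b c, b·a·c = 1}`. -/
def Jset (M : Type*) [Monoid M] : Set M := {a | ∃ b c : M, b * a * c = 1}

theorem isDedekindFiniteMonoid_of_finite_rightInvertible {N : Type*} [Monoid N]
    (h : {a : N | ∃ b : N, a * b = 1}.Finite) : IsDedekindFiniteMonoid N := by
  refine .of_exists_mul_self_eq_one N fun a b hab => ?_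
  have hmaps : Set.MapsTo (· * a) {x : N | ∃ y, x * y = 1} {x : N | ∃ y, x * y = 1} :=
    fun x ⟨y, hxy⟩ => ⟨b * y, by rw [mul_assoc, ← mul_assoc a, hab, one_mul, hxy]⟩
  have hinj : Set.InjOn (· * a) {x : N | ∃ y, x * y = 1} :=
    (isRightRegular_of_mul_eq_one hab).injOn
  obtain ⟨c, -, hc⟩ := ((h.injOn_iff_bijOn_of_mapsTo hmaps).mp hinj).surjOn ⟨1, one_mul 1⟩
  exact ⟨c, hc⟩

theorem isUnit_of_mem_jset {M : Type*} [Monoid M] [IsDedekindFiniteMonoid M] {a : M}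
    (ha : a ∈ Jset M) : IsUnit a := by
  obtain ⟨b, c, hbac⟩ := ha
  exact isUnit_of_mul_isUnit_right (isUnit_of_mul_isUnit_left (hbac ▸ isUnit_one))

theorem mem_jset_of_isUnit {M : Type*} [Monoid M] {a : M} (ha : IsUnit a) : a ∈ Jset M :=
  ⟨↑ha.unit⁻¹, 1, by simp⟩

theorem jset_eq_setOf_isUnit {M : Type*} [Monoid M] [IsDedekindFiniteMonoid M] :
    Jset M = {a | IsUnit a} :=
  Set.ext fun _ => ⟨isUnit_of_mem_jset, mem_jset_of_isUnit⟩

/-- If a monoid `N` has finitely many right-invertible elements, then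
`J(N)` is a finite subgroup of `N`: it is finite, it is the carrier of a submonoid of `N`,
and each of its elements has a two-sided inverse lying in `J(N)`. -/
theorem stmt3 (N : Type*) [Monoid N] (h : {a : N | ∃ b : N, a * b = 1}.Finite) :
    (Jset N).Finite ∧ (∃ P : Submonoid N, (P : Set N) = Jset N) ∧
      ∀ a ∈ Jset N, ∃ b ∈ Jset N, a * b = 1 ∧ b * a = 1 := by
  have := isDedekindFiniteMonoid_of_finite_rightInvertible h
  refine ⟨h.subset fun a ha => ?_, ⟨IsUnit.submonoid N, jset_eq_setOf_isUnit.symm⟩,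
    fun a ha => ?_⟩
  · exact ⟨_, (isUnit_of_mem_jset ha).mul_val_inv⟩
  · obtain ⟨u, rfl⟩ := isUnit_of_mem_jset ha
    exact ⟨↑u⁻¹, mem_jset_of_isUnit u⁻¹.isUnit, u.mul_inv, u.inv_mul⟩

end Paper
end

section
/- For every monoid M and every finite group F, the classes of valence-automaton languages coincide: for every finite alphabet X, a language L ⊆ X* lies in VA(M × F) if and only if it lies in VA(M). -/
namespace Paper

def VA (M : Type*) [Monoid M] {X : Type} (L : Language X) : Prop :=
  ∃ (Y : Type) (_ : Fintype Y) (R : Language Y)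
    (φ : FreeMonoid Y →* M) (h : FreeMonoid Y →* FreeMonoid X),
    R.IsRegular ∧
      L = (fun w => FreeMonoid.toList (h w)) ''
            {w : FreeMonoid Y | FreeMonoid.toList w ∈ R ∧ φ w = 1}

theorem isRegular_preimage_of_finite {Y N : Type*} [Monoid N] [Finite N]
    (ψ : FreeMonoid Y →* N) (S : Set N) :
    Language.IsRegular {l : List Y | ψ (FreeMonoid.ofList l) ∈ S} := by
  -- Myhill–Nerode: the left quotient by `x` depends only on `ψ x`.
  refine Language.IsRegular.of_finite_range_leftQuotient <|
    (Set.finite_range fun n : N => ({l | n * ψ (FreeMonoid.ofList l) ∈ S} : Language Y)).subset ?_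
  rintro _ ⟨x, rfl⟩
  refine ⟨ψ (FreeMonoid.ofList x), ?_⟩
  ext y
  change _ ∈ S ↔ _ ∈ S
  rw [FreeMonoid.ofList_append, map_mul]

theorem VA.map {M N : Type*} [Monoid M] [Monoid N] {X : Type} {L : Language X}
    (f : M →* N) (hf : ∀ m, f m = 1 → m = 1) (hL : VA M L) : VA N L := by
  obtain ⟨Y, _, R, φ, h, hR, rfl⟩ := hL
  refine ⟨Y, inferInstance, R, f.comp φ, h, hR, ?_⟩
  congr 1
  ext w
  simp only [Set.mem_ofPred_eq, MonoidHom.comp_apply]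
  exact and_congr_right' ⟨fun hw => by rw [hw, map_one], hf _⟩

-- The finite component of the monoid is checked by the regular control language instead.
theorem VA.of_prod_of_finite {M N : Type*} [Monoid M] [Monoid N] [Finite N] {X : Type}
    {L : Language X} (hL : VA (M × N) L) : VA M L := by
  obtain ⟨Y, _, R, φ, h, hR, rfl⟩ := hL
  refine ⟨Y, inferInstance, R ⊓ {l | (MonoidHom.snd M N).comp φ (FreeMonoid.ofList l) ∈ {1}},
    (MonoidHom.fst M N).comp φ, h, hR.inf (isRegular_preimage_of_finite _ _), ?_⟩
  congr 1
  ext w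
  simp only [Set.mem_ofPred_eq, MonoidHom.comp_apply, MonoidHom.coe_fst, MonoidHom.coe_snd,
    Prod.ext_iff, Prod.fst_one, Prod.snd_one]
  exact ⟨fun ⟨hw, h₁, h₂⟩ => ⟨⟨hw, h₂⟩, h₁⟩, fun ⟨⟨hw, h₂⟩, h₁⟩ => ⟨hw, h₁, h₂⟩⟩

theorem stmt4_general (M : Type*) [Monoid M] (F : Type*) [Group F] [Fintype F]
    (X : Type) (L : Language X) :
    VA (M × F) L ↔ VA M L :=
  ⟨VA.of_prod_of_finite, VA.map (MonoidHom.inl M F) fun _ hm => congrArg Prod.fst hm⟩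

/-- For every monoid `M` and finite group `F`, the classes of valence
automaton languages over `M × F` and over `M` coincide. -/
theorem stmt4 (M : Type*) [Monoid M] (F : Type*) [Group F] [Fintype F]
    (X : Type) [Fintype X] (L : Language X) :
    VA (M × F) L ↔ VA M L :=
  stmt4_general M F X L

end Paper
end

section
/- For every monoid M, the following are equivalent: (1) M is an FRI-monoid; (2) for every finite alphabet X, a language L ⊆ X* lies in VA(M) if and only if L is regular. -/
/-!
Let `φ : Y* → M` have image `N`. The left quotient of the identity language `φ⁻¹(1)` by a word
`x` is the preimage of `{c ∈ N | φ(x) c = 1}`, and this set is empty unless `φ(x)` is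
right-invertible in `N`. So by Myhill–Nerode `φ⁻¹(1)` is regular iff `N` has finitely many sets
`{c | a c = 1}`, and this holds iff `N` has finitely many right-invertible elements: if there are
finitely many such sets, pigeonhole on the powers of `a` shows that `a b = 1` forces `b a = 1`,
and then `a` is recovered from `{c | a c = 1}`.

Over an FRI-monoid `φ⁻¹(1)` is therefore regular, and `h(R ∩ φ⁻¹(1))` is the image of a regular
language under a homomorphism of free monoids, hence regular. Conversely, a finitely generated
submonoid is the image of some `φ`, and `φ⁻¹(1)` itself lies in `VA(M)`.
-/

section RightInverses

variable {N : Type*} [Monoid N]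

theorem IsDedekindFiniteMonoid.of_finite_range_setOf_mul_eq_one
    (h : (Set.range fun a : N => {c | a * c = 1}).Finite) : IsDedekindFiniteMonoid N := by
  refine ⟨fun {a b} hab => ?_⟩
  obtain ⟨m, n, hmn, hq⟩ := Set.Finite.exists_lt_map_eq_of_forall_mem
    (f := fun n : ℕ => {c : N | a ^ n * c = 1}) (fun n => Set.mem_range_self (a ^ n)) h
  obtain ⟨k, rfl⟩ := Nat.exists_eq_add_of_lt hmn
  -- `b ^ m` is a right inverse of `a ^ m`, hence of `a ^ (m + k + 1) = a ^ (k + 1) * a ^ m`.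
  have hpow : a ^ (k + 1) = 1 := by
    have hbm : a ^ (m + k + 1) * b ^ m = 1 := by
      change b ^ m ∈ {c | a ^ (m + k + 1) * c = 1}
      exact hq ▸ pow_mul_pow_eq_one m hab
    rwa [add_assoc, add_comm, pow_add, mul_assoc, pow_mul_pow_eq_one m hab, mul_one] at hbm
  have hb : a ^ k = b := left_inv_eq_right_inv (by rw [← pow_succ, hpow]) hab
  rw [← hb, ← pow_succ, hpow]

theorem finite_range_setOf_mul_eq_one_iff :
    (Set.range fun a : N => {c | a * c = 1}).Finite ↔ {a : N | ∃ b, a * b = 1}.Finite := by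
  constructor
  · intro h
    have := IsDedekindFiniteMonoid.of_finite_range_setOf_mul_eq_one h
    refine Set.Finite.of_finite_image (h.subset (Set.image_subset_range _ _)) ?_
    rintro a ⟨b, hab⟩ a' - hq
    have ha'b : a' * b = 1 := by
      change b ∈ (fun a => {c | a * c = 1}) a'
      rw [← hq]
      exact hab
    exact (left_inv_eq_right_inv ha'b (mul_eq_one_symm hab)).symm
  · intro h
    refine ((h.image fun a => {c | a * c = 1}).insert ∅).subset ?_
    rintro _ ⟨a, rfl⟩
    by_cases ha : ∃ b, a * b = 1
    · exact Or.inr ⟨a, ha, rfl⟩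
    · exact Or.inl (Set.eq_empty_of_forall_notMem fun b hb => ha ⟨b, hb⟩)

end RightInverses

theorem Language.isRegular_top {α : Type*} : (⊤ : Language α).IsRegular :=
  ⟨Unit, inferInstance, ⟨fun _ _ => (), (), Set.univ⟩,
    Language.ext fun _ => iff_of_true trivial trivial⟩

theorem εNFA.isRegular_accepts {α σ : Type*} [Finite σ] (M : εNFA α σ) : M.accepts.IsRegular :=
  Language.isRegular_iff.mpr ⟨_, Fintype.ofFinite (Set σ), M.toNFA.toDFA, by simp⟩

namespace DFA

variable {X Y σ : Type*} (out : Y → List X) (D : DFA Y σ)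

def pendingOutputs : Set (List X) := {l | l = [] ∨ ∃ y, l <:+ out y}

theorem finite_pendingOutputs [Finite Y] : (pendingOutputs out).Finite := by
  refine ((Set.finite_iUnion fun y => (out y).tails.finite_toSet).insert []).subset ?_
  rintro l (rfl | ⟨y, hy⟩)
  · exact Set.mem_insert _ _
  · exact Or.inr (Set.mem_iUnion.mpr ⟨y, (List.mem_tails _ _).mpr hy⟩)

theorem mem_pendingOutputs_of_cons {x : X} {l : List X} (h : x :: l ∈ pendingOutputs out) :
    l ∈ pendingOutputs out := by
  rcases h with h | ⟨y, hy⟩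
  · exact absurd h (List.cons_ne_nil x l)
  · exact Or.inr ⟨y, (List.suffix_cons x l).trans hy⟩

-- In state `(q, l)` the DFA is in state `q` and `l` is the unread rest of the image of its last
-- letter; an ε-move feeds the DFA a new letter once nothing is pending.
def flatMapεNFA : εNFA X (σ × pendingOutputs out) where
  step p a := {p' | (a = none ∧ p.2.1 = [] ∧ ∃ y, p'.1 = D.step p.1 y ∧ p'.2.1 = out y) ∨
    (∃ x, a = some x ∧ p.2.1 = x :: p'.2.1 ∧ p'.1 = p.1)}
  start := {(D.start, ⟨[], Or.inl rfl⟩)}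
  accept := {p | p.1 ∈ D.accept ∧ p.2.1 = []}

theorem flatMapεNFA_isPath_spell (q : σ) :
    ∀ (l : List X) (hl : l ∈ pendingOutputs out),
      (D.flatMapεNFA out).IsPath (q, ⟨l, hl⟩) (q, ⟨[], Or.inl rfl⟩) (l.map some)
  | [], _ => .nil _
  | x :: l, hl => .cons (q, ⟨l, mem_pendingOutputs_of_cons out hl⟩) _ _ _ _
      (Or.inr ⟨x, rfl, rfl, rfl⟩) (flatMapεNFA_isPath_spell q l _)

theorem flatMapεNFA_isPath_of_evalFrom (w : List Y) (q : σ) :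
    ∃ u : List (Option X), u.reduceOption = w.flatMap out ∧
      (D.flatMapεNFA out).IsPath (q, ⟨[], Or.inl rfl⟩) (D.evalFrom q w, ⟨[], Or.inl rfl⟩) u := by
  induction w generalizing q with
  | nil => exact ⟨[], rfl, .nil _⟩
  | cons y w ih =>
    obtain ⟨u, hu, hpath⟩ := ih (D.step q y)
    have hy : out y ∈ pendingOutputs out := Or.inr ⟨y, List.suffix_refl _⟩
    refine ⟨none :: ((out y).map some ++ u), ?_, .cons (D.step q y, ⟨out y, hy⟩) _ _ _ _
      (Or.inl ⟨rfl, rfl, y, rfl, rfl⟩) ?_⟩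
    · rw [List.reduceOption_cons_of_none, List.reduceOption_append, hu]
      simp [List.reduceOption, List.filterMap_map]
    · exact (εNFA.isPath_append _).mpr ⟨_, flatMapεNFA_isPath_spell out D _ _ hy, hpath⟩

theorem exists_evalFrom_of_flatMapεNFA_isPath {p p' : σ × pendingOutputs out}
    {u : List (Option X)} (hpath : (D.flatMapεNFA out).IsPath p p' u) (hp' : p'.2.1 = []) :
    ∃ w : List Y, p.2.1 ++ w.flatMap out = u.reduceOption ∧ D.evalFrom p.1 w = p'.1 := by
  induction hpath with
  | nil p => exact ⟨[], by simp [hp'], rfl⟩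
  | cons t s _ a u hstep _ ih =>
    obtain ⟨w, hw, hev⟩ := ih hp'
    rcases hstep with ⟨rfl, hs, y, ht1, ht2⟩ | ⟨x, rfl, hs, ht1⟩
    · exact ⟨y :: w, by simp [hs, ← ht2, hw], by rw [evalFrom_cons, ← ht1, hev]⟩
    · exact ⟨w, by simp [hs, hw], by rw [← ht1, hev]⟩

theorem mem_flatMapεNFA_accepts {xs : List X} :
    xs ∈ (D.flatMapεNFA out).accepts ↔ ∃ w ∈ D.accepts, w.flatMap out = xs := by
  rw [εNFA.mem_accepts_iff_exists_path]
  constructor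
  · rintro ⟨s, t, u, rfl, ⟨ht, htnil⟩, rfl, hpath⟩
    obtain ⟨w, hw, hev⟩ := exists_evalFrom_of_flatMapεNFA_isPath out D hpath htnil
    exact ⟨w, by rwa [mem_accepts, eval, hev], hw⟩
  · rintro ⟨w, hw, rfl⟩
    obtain ⟨u, hu, hpath⟩ := flatMapεNFA_isPath_of_evalFrom out D w D.start
    exact ⟨_, _, u, rfl, ⟨(D.mem_accepts).mp hw, rfl⟩, hu, hpath⟩

end DFA

theorem Language.IsRegular.image_flatMap {X Y : Type*} [Finite Y] {R : Language Y}
    (hR : R.IsRegular) (out : Y → List X) :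
    Language.IsRegular {xs : List X | ∃ w ∈ R, w.flatMap out = xs} := by
  obtain ⟨σ, _, D, rfl⟩ := hR
  have := (DFA.finite_pendingOutputs out).to_subtype
  have h := εNFA.isRegular_accepts (D.flatMapεNFA out)
  rwa [show (D.flatMapεNFA out).accepts = _ from
    Language.ext fun xs => DFA.mem_flatMapεNFA_accepts out D] at h

open FreeMonoid

theorem FreeMonoid.toList_apply_eq_flatMap {X Y : Type*} (h : FreeMonoid Y →* FreeMonoid X)
    (w : FreeMonoid Y) : toList (h w) = (toList w).flatMap fun y => toList (h (of y)) := by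
  conv_lhs => rw [← lift_restrict h, lift_apply, toList_prod]
  simp only [List.flatMap_def, List.map_map]
  rfl

theorem Submonoid.FG.exists_mrange_eq {M : Type*} [Monoid M] {N : Submonoid M} (hN : N.FG) :
    ∃ (n : ℕ) (φ : FreeMonoid (Fin n) →* M), MonoidHom.mrange φ = N := by
  obtain ⟨S, rfl⟩ := hN
  refine ⟨S.card, FreeMonoid.lift fun i => (S.equivFin.symm i : M), ?_⟩
  rw [FreeMonoid.mrange_lift]
  congr
  exact (S.equivFin.symm.surjective.range_comp Subtype.val).trans Subtype.range_coe

section IdentityLanguage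

variable {α N : Type*} [Monoid N]

def MonoidHom.identityLanguage (f : FreeMonoid α →* N) : Language α :=
  {l | f (ofList l) = 1}

@[simp]
theorem MonoidHom.mem_identityLanguage {f : FreeMonoid α →* N} {l : List α} :
    l ∈ f.identityLanguage ↔ f (ofList l) = 1 :=
  Iff.rfl

@[simp]
theorem MonoidHom.identityLanguage_one : (1 : FreeMonoid α →* N).identityLanguage = ⊤ :=
  Language.ext fun _ => iff_of_true rfl trivial

theorem MonoidHom.isRegular_identityLanguage_iff (f : FreeMonoid α →* N)
    (hf : Function.Surjective f) :
    f.identityLanguage.IsRegular ↔ (Set.range fun a : N => {c | a * c = 1}).Finite := by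
  set g : List α → N := fun l => f (ofList l)
  have hg : Function.Surjective g := fun a => (hf a).imp fun w hw => hw
  have hquot (x : List α) : f.identityLanguage.leftQuotient x = g ⁻¹' {c | g x * c = 1} :=
    Language.ext fun y => by
      rw [Language.mem_leftQuotient, MonoidHom.mem_identityLanguage, ofList_append, map_mul]
      rfl
  rw [Language.isRegular_iff_finite_range_leftQuotient]
  constructor
  · intro h
    refine (h.image (g '' ·)).subset ?_
    rintro _ ⟨a, rfl⟩
    obtain ⟨x, rfl⟩ := hg a
    exact ⟨_, ⟨x, rfl⟩, by simp only [hquot, Set.image_preimage_eq _ hg]⟩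
  · intro h
    refine (h.image (g ⁻¹' ·)).subset ?_
    rintro _ ⟨x, rfl⟩
    exact ⟨_, ⟨g x, rfl⟩, (hquot x).symm⟩

theorem MonoidHom.identityLanguage_mrangeRestrict (f : FreeMonoid α →* N) :
    f.mrangeRestrict.identityLanguage = f.identityLanguage :=
  Language.ext fun _ => Subtype.ext_iff

theorem MonoidHom.isRegular_identityLanguage_iff_finite (f : FreeMonoid α →* N) :
    f.identityLanguage.IsRegular ↔ {a : MonoidHom.mrange f | ∃ b, a * b = 1}.Finite := by
  rw [← identityLanguage_mrangeRestrict,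
    isRegular_identityLanguage_iff _ f.mrangeRestrict_surjective, finite_range_setOf_mul_eq_one_iff]

end IdentityLanguage

namespace Paper

section

variable {M : Type*} [Monoid M]

theorem VA_inf_identityLanguage {X : Type} [Fintype X] {R : Language X} (hR : R.IsRegular)
    (φ : FreeMonoid X →* M) : VA M (R ⊓ φ.identityLanguage) :=
  ⟨X, inferInstance, R, φ, MonoidHom.id _, hR,
    Language.ext fun l => ⟨fun hl => ⟨ofList l, hl, rfl⟩, by rintro ⟨w, hw, rfl⟩; exact hw⟩⟩

theorem VA_of_isRegular {X : Type} [Fintype X] {L : Language X} (hL : L.IsRegular) : VA M L := by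
  simpa using VA_inf_identityLanguage hL (1 : FreeMonoid X →* M)

theorem IsFRI.isRegular_of_VA (hM : IsFRI M) {X : Type} {L : Language X} (hL : VA M L) :
    L.IsRegular := by
  obtain ⟨Y, _, R, φ, h, hR, rfl⟩ := hL
  have hker : φ.identityLanguage.IsRegular :=
    φ.isRegular_identityLanguage_iff_finite.mpr <|
      hM _ ((Monoid.fg_iff_submonoid_fg _).mp inferInstance)
  refine (congrArg Language.IsRegular (Language.ext fun xs => ?_)).mpr
    ((hR.inf hker).image_flatMap fun y => toList (h (of y)))
  constructor
  · rintro ⟨w, hw, rfl⟩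
    exact ⟨toList w, hw, (toList_apply_eq_flatMap h w).symm⟩
  · rintro ⟨w, hw, rfl⟩
    exact ⟨ofList w, hw, toList_apply_eq_flatMap h (ofList w)⟩

theorem isFRI_of_forall_VA_isRegular
    (h : ∀ (X : Type) [Fintype X] (L : Language X), VA M L → L.IsRegular) : IsFRI M := by
  intro N hN
  obtain ⟨n, φ, rfl⟩ := hN.exists_mrange_eq
  refine φ.isRegular_identityLanguage_iff_finite.mp (h _ _ ?_)
  simpa using VA_inf_identityLanguage Language.isRegular_top φ

end

/-- A monoid `M` is an FRI-monoid iff for every finite alphabet `X`,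
a language `L ⊆ X*` lies in `VA M` exactly when it is regular. -/
theorem stmt5 (M : Type*) [Monoid M] :
    IsFRI M ↔ ∀ (X : Type) (_ : Fintype X) (L : Language X), (VA M L ↔ L.IsRegular) :=
  ⟨fun hM _ _ _ => ⟨hM.isRegular_of_VA, VA_of_isRegular⟩,
    fun h => isFRI_of_forall_VA_isRegular fun X _ L => (h X inferInstance L).mp⟩

end Paper
end

section
/- Let M₀ and M₁ be monoids such that neither M₀ nor M₁ is an FRI-monoid. Then there exist a finite alphabet X and a language L ⊆ X* with L ∈ VA(M₀ × M₁) such that L is not context-free. -/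
/-!
Call `(u, x)` a *tight pair* for `φ : Y* → M` if `φ (u x) = 1`, `u` is a shortest word with
`φ (u' x) = 1` and `x` a shortest word with `φ (u x') = 1`. If `M` is not FRI, some `φ` from a
finite alphabet has tight pairs with both components arbitrarily long: either `ab = 1 ≠ ba` for
some `a, b`, and `(aⁿ, bⁿ)` is tight in the bicyclic monoid they generate, or right inverses are
two-sided, and then a finitely generated submonoid with infinitely many units has a unit `g`
such that shortest words for `g` and `g⁻¹` are both long.

Given such `φ₀`, `φ₁`, the word problem of `(φ₀, φ₁)` over `Y₀ ⊕ Y₁` lies in `VA (M₀ × M₁)`.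
Pump the word `u₀ u₁ x₀ x₁` down, where both tight pairs are longer than the pumping
constant: the deleted letters lie in two adjacent blocks, so in each coordinate one factor of
the tight pair survives intact and tightness forbids shortening the other one. Hence the
language is not context-free.
-/

namespace ContextFreeGrammar

variable {T : Type*} {g : ContextFreeGrammar T}

inductive DerivesIn (g : ContextFreeGrammar T) :
    List (Symbol T g.NT) → List (Symbol T g.NT) → ℕ → Prop
  | refl (u : List (Symbol T g.NT)) : g.DerivesIn u u 0
  | head {u v w : List (Symbol T g.NT)} {n : ℕ} :
      g.Produces u v → g.DerivesIn v w n → g.DerivesIn u w (n + 1)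

namespace DerivesIn

variable {u v w : List (Symbol T g.NT)} {m n : ℕ}

lemma derives (h : g.DerivesIn u v n) : g.Derives u v := by
  induction h with
  | refl => exact Derives.refl _
  | head hp _ ih => exact hp.trans_derives ih

lemma trans (h₁ : g.DerivesIn u v m) (h₂ : g.DerivesIn v w n) : g.DerivesIn u w (m + n) := by
  induction h₁ with
  | refl => simpa using h₂
  | head hp _ ih => exact Nat.succ_add _ n ▸ head hp (ih h₂)

lemma append_left (h : g.DerivesIn v w n) (p : List (Symbol T g.NT)) :
    g.DerivesIn (p ++ v) (p ++ w) n := by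
  induction h with
  | refl => exact refl _
  | head hp _ ih => exact head (hp.append_left p) ih

lemma append_right (h : g.DerivesIn v w n) (p : List (Symbol T g.NT)) :
    g.DerivesIn (v ++ p) (w ++ p) n := by
  induction h with
  | refl => exact refl _
  | head hp _ ih => exact head (hp.append_right p) ih

lemma subst {A : g.NT} {l r s : List (Symbol T g.NT)}
    (h₁ : g.DerivesIn u (l ++ [.nonterminal A] ++ r) m)
    (h₂ : g.DerivesIn [.nonterminal A] s n) : g.DerivesIn u (l ++ s ++ r) (m + n) :=
  h₁.trans ((h₂.append_left l).append_right r)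

end DerivesIn

lemma Derives.exists_derivesIn {u v : List (Symbol T g.NT)} (h : g.Derives u v) :
    ∃ n, g.DerivesIn u v n := by
  induction h using Relation.ReflTransGen.head_induction_on with
  | refl => exact ⟨0, .refl _⟩
  | head hp _ ih => exact ⟨_, .head hp ih.choose_spec⟩

variable (g) in
def ReachesIn (A : g.NT) (a : List T) (B : g.NT) (b : List T) (n : ℕ) : Prop :=
  g.DerivesIn [.nonterminal A] (a.map .terminal ++ [.nonterminal B] ++ b.map .terminal) n

namespace ReachesIn

variable {A B C : g.NT} {a b a' b' x : List T} {m n : ℕ}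

lemma trans (h₁ : g.ReachesIn A a B b m) (h₂ : g.ReachesIn B a' C b' n) :
    g.ReachesIn A (a ++ a') C (b' ++ b) (m + n) := by
  simpa [ReachesIn] using h₁.subst h₂

lemma plug (h₁ : g.ReachesIn A a B b m)
    (h₂ : g.DerivesIn [.nonterminal B] (x.map .terminal) n) :
    g.DerivesIn [.nonterminal A] ((a ++ x ++ b).map .terminal) (m + n) := by
  simpa using h₁.subst h₂

end ReachesIn

inductive ParseForest (g : ContextFreeGrammar T) : List (Symbol T g.NT) → List T → Type _
  | nil : g.ParseForest [] []
  | terminal {s : List (Symbol T g.NT)} {w : List T} (t : T) :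
      g.ParseForest s w → g.ParseForest (.terminal t :: s) (t :: w)
  | nonterminal {s : List (Symbol T g.NT)} {w₁ w₂ : List T} (r : ContextFreeRule T g.NT)
      (hr : r ∈ g.rules) : g.ParseForest r.output w₁ → g.ParseForest s w₂ →
      g.ParseForest (.nonterminal r.input :: s) (w₁ ++ w₂)

namespace ParseForest

def size {s : List (Symbol T g.NT)} {w : List T} : g.ParseForest s w → ℕ
  | .nil => 0
  | .terminal _ f => f.size
  | .nonterminal _ _ f₁ f₂ => f₁.size + f₂.size + 1

def height {s : List (Symbol T g.NT)} {w : List T} : g.ParseForest s w → ℕ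
  | .nil => 0
  | .terminal _ f => f.height
  | .nonterminal _ _ f₁ f₂ => max (f₁.height + 1) f₂.height

variable {s s₁ s₂ : List (Symbol T g.NT)} {w w₁ w₂ : List T}

lemma derivesIn (f : g.ParseForest s w) : g.DerivesIn s (w.map .terminal) f.size := by
  induction f with
  | nil => exact .refl _
  | terminal t f ih => simpa [size] using ih.append_left [.terminal t]
  | @nonterminal s w₁ w₂ r hr f₁ f₂ ih₁ ih₂ =>
      have hstep : g.Produces (.nonterminal r.input :: s) (r.output ++ s) :=
        ⟨r, hr, ContextFreeRule.Rewrites.head _⟩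
      simpa [size, Nat.add_comm] using
        DerivesIn.head hstep ((ih₁.append_right s).trans (ih₂.append_left _))

def ofTerminals (g : ContextFreeGrammar T) : (w : List T) → g.ParseForest (w.map .terminal) w
  | [] => .nil
  | t :: w => .terminal t (ofTerminals g w)

lemma size_ofTerminals (w : List T) : (ofTerminals g w).size = 0 := by
  induction w with
  | nil => rfl
  | cons t w ih => exact ih

lemma exists_split :
    ∀ (s₁ : List (Symbol T g.NT)) {w : List T} (f : g.ParseForest (s₁ ++ s₂) w),
    ∃ (w₁ w₂ : List T) (f₁ : g.ParseForest s₁ w₁) (f₂ : g.ParseForest s₂ w₂),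
      w = w₁ ++ w₂ ∧ f₁.size + f₂.size = f.size
  | [], _, f => ⟨[], _, .nil, f, rfl, by simp [size]⟩
  | _ :: s₁, _, f => by
    cases f with
    | terminal t f =>
        obtain ⟨w₁, w₂, f₁, f₂, rfl, hs⟩ := exists_split s₁ f
        exact ⟨t :: w₁, w₂, .terminal t f₁, f₂, rfl, hs⟩
    | nonterminal r hr f f' =>
        obtain ⟨w₁, w₂, f₁, f₂, rfl, hs⟩ := exists_split s₁ f'
        exact ⟨_ ++ w₁, w₂, .nonterminal r hr f f₁, f₂, by simp,
          by simp only [size]; omega⟩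

lemma exists_append (f₁ : g.ParseForest s₁ w₁) (f₂ : g.ParseForest s₂ w₂) :
    ∃ f : g.ParseForest (s₁ ++ s₂) (w₁ ++ w₂), f.size = f₁.size + f₂.size := by
  induction f₁ with
  | nil => exact ⟨f₂, by simp [size]⟩
  | terminal t f ih =>
      obtain ⟨f', hf'⟩ := ih
      exact ⟨.terminal t f', hf'⟩
  | nonterminal r hr f₀ f ih₀ ih =>
      obtain ⟨f', hf'⟩ := ih
      rw [List.append_assoc]
      exact ⟨.nonterminal r hr f₀ f', by simp [size, hf']; omega⟩

end ParseForest

lemma DerivesIn.exists_parseForest {n : ℕ} : ∀ {s : List (Symbol T g.NT)} {w : List T},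
    g.DerivesIn s (w.map .terminal) n → ∃ f : g.ParseForest s w, f.size = n := by
  induction n with
  | zero =>
      rintro s w ⟨⟩
      exact ⟨.ofTerminals g w, ParseForest.size_ofTerminals w⟩
  | succ n ih =>
      rintro s w (_ | ⟨⟨r, hr, hrw⟩, hd⟩)
      obtain ⟨p, q, rfl, rfl⟩ := hrw.exists_parts
      obtain ⟨f, rfl⟩ := ih (by simpa using hd)
      obtain ⟨w₁, w', f₁, f', rfl, hs⟩ := ParseForest.exists_split p f
      obtain ⟨w₂, w₃, f₂, f₃, rfl, hs'⟩ := ParseForest.exists_split r.output f'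
      obtain ⟨f'', hf''⟩ := ParseForest.exists_append f₁ (.nonterminal r hr f₂ f₃)
      rw [List.append_assoc, List.singleton_append]
      exact ⟨f'', by simp only [hf'', ParseForest.size] at hs hs' ⊢; omega⟩

variable (g) in
open scoped Classical in
noncomputable def inputs : Finset g.NT := g.rules.image (·.input)

namespace ParseForest

variable {s : List (Symbol T g.NT)} {w : List T} {A : g.NT}

lemma length_le {m : ℕ} (hm : 1 ≤ m) (hrules : ∀ r ∈ g.rules, r.output.length ≤ m)
    (f : g.ParseForest s w) : w.length ≤ s.length * m ^ f.height := by
  induction f with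
  | nil => simp
  | @terminal s w t f ih =>
      have : 1 ≤ m ^ f.height := Nat.one_le_pow _ _ hm
      simp only [height, List.length_cons]
      nlinarith
  | @nonterminal s w₁ w₂ r hr f₁ f₂ ih₁ ih₂ =>
      have h₁ : m ^ (f₁.height + 1) ≤ m ^ (nonterminal r hr f₁ f₂).height :=
        Nat.pow_le_pow_right hm (le_max_left _ _)
      have h₂ : m ^ f₂.height ≤ m ^ (nonterminal r hr f₁ f₂).height :=
        Nat.pow_le_pow_right hm (le_max_right _ _)
      have := Nat.mul_le_mul_right (m ^ f₁.height) (hrules r hr)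
      rw [List.length_append, List.length_cons, Nat.add_mul, one_mul]
      rw [pow_succ] at h₁
      nlinarith [Nat.mul_le_mul_left s.length h₂]

lemma root_mem_inputs (f : g.ParseForest [.nonterminal A] w) : A ∈ g.inputs := by
  cases f with
  | nonterminal r hr _ _ => simpa [inputs] using ⟨r, hr, rfl⟩

lemma exists_tallest_tree (f : g.ParseForest s w) (hf : 0 < f.height) :
    ∃ (C : g.NT) (a w₁ b : List T) (c : ℕ) (t : g.ParseForest [.nonterminal C] w₁),
      w = a ++ w₁ ++ b ∧
      g.DerivesIn s (a.map .terminal ++ [.nonterminal C] ++ b.map .terminal) c ∧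
      t.size + c = f.size ∧ t.height = f.height := by
  induction f with
  | nil => simp [height] at hf
  | terminal t f ih =>
      obtain ⟨C, a, w₁, b, c, t', rfl, d, hs, hh⟩ := ih hf
      exact ⟨C, t :: a, w₁, b, c, t', rfl, by simpa using d.append_left [.terminal t], hs, hh⟩
  | @nonterminal s w₁ w₂ r hr f₁ f₂ ih₁ ih₂ =>
      by_cases hc : f₂.height ≤ f₁.height + 1
      · refine ⟨r.input, [], w₁ ++ [], w₂, f₂.size, .nonterminal r hr f₁ .nil, by simp,
          by simpa using f₂.derivesIn.append_left [.nonterminal r.input], by simp [size]; omega,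
          by simp [height, hc]⟩
      · obtain ⟨C, a, w', b, c, t, rfl, d, hs, hh⟩ := ih₂ (by omega)
        have hstep : g.Produces (.nonterminal r.input :: s) (r.output ++ s) :=
          ⟨r, hr, ContextFreeRule.Rewrites.head _⟩
        refine ⟨C, w₁ ++ a, w', b, 1 + f₁.size + c, t, by simp, ?_, by simp [size]; omega,
          by simp [height]; omega⟩
        simpa [Nat.add_comm, Nat.add_left_comm, Nat.add_assoc] using
          DerivesIn.head hstep ((f₁.derivesIn.append_right s).trans (d.append_left _))

lemma exists_child (f : g.ParseForest [.nonterminal A] w) (hf : 2 ≤ f.height) :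
    ∃ (C : g.NT) (a w₁ b : List T) (c : ℕ) (t : g.ParseForest [.nonterminal C] w₁),
      w = a ++ w₁ ++ b ∧ g.ReachesIn A a C b c ∧ 0 < c ∧
      t.size + c = f.size ∧ t.height + 1 = f.height := by
  rcases f with _ | _ | ⟨r, hr, f₁, _ | _ | _⟩
  have hstep : g.Produces [.nonterminal r.input] r.output :=
    ⟨r, hr, ContextFreeRule.Rewrites.input_output⟩
  simp only [height] at hf ⊢
  obtain ⟨C, a, w₁, b, c, t, rfl, d, hs, hh⟩ := f₁.exists_tallest_tree (by omega)
  exact ⟨C, a, w₁, b, c + 1, t, by simp, .head hstep d, by omega, by simp [size]; omega,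
    by omega⟩

end ParseForest

variable (g) in
def DerivesVia (A B : g.NT) (w : List T) (n : ℕ) : Prop :=
  ∃ (a x b : List T) (c₁ c₂ : ℕ), w = a ++ x ++ b ∧ g.ReachesIn A a B b c₁ ∧
    0 < c₁ ∧ g.DerivesIn [.nonterminal B] (x.map .terminal) c₂ ∧ c₁ + c₂ = n

variable (g) in
def PumpsDown (A : g.NT) (w : List T) (n P : ℕ) : Prop :=
  ∃ (u v x y z : List T) (c : ℕ), w = u ++ v ++ x ++ y ++ z ∧ (v ++ x ++ y).length ≤ P ∧
    c < n ∧ g.DerivesIn [.nonterminal A] ((u ++ x ++ z).map .terminal) c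

variable {A B C : g.NT} {a b w : List T} {c n P : ℕ}

lemma DerivesVia.lift (h : g.ReachesIn A a C b c) (hv : g.DerivesVia C B w n) :
    g.DerivesVia A B (a ++ w ++ b) (c + n) := by
  obtain ⟨a', x, b', c₁, c₂, rfl, h₁, hc₁, h₂, rfl⟩ := hv
  exact ⟨a ++ a', x, b' ++ b, c + c₁, c₂, by simp, h.trans h₁, by omega, h₂, by omega⟩

lemma PumpsDown.lift (h : g.ReachesIn A a C b c) (hs : g.PumpsDown C w n P) :
    g.PumpsDown A (a ++ w ++ b) (c + n) P := by
  obtain ⟨u, v, x, y, z, c', rfl, hP, hc', d⟩ := hs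
  exact ⟨a ++ u, v, x, y, z ++ b, c + c', by simp, hP, by omega, by simpa using h.plug d⟩

lemma DerivesVia.pumpsDown (h : g.DerivesVia A A w n) (hw : w.length ≤ P) :
    g.PumpsDown A w n P := by
  obtain ⟨a, x, b, c₁, c₂, rfl, -, hc₁, d, rfl⟩ := h
  exact ⟨[], a, x, b, [], c₂, by simp, by simpa using hw, by omega, by simpa using d⟩

namespace ParseForest

/-- Pigeonhole down a tallest path: `F` holds the labels of the nodes above the current one,
so a label met twice yields a loop. -/
theorem pumpsDown_or_derivesVia [DecidableEq g.NT] {A : g.NT} {w : List T} (F : Finset g.NT)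
    (f : g.ParseForest [.nonterminal A] w) (hA : A ∉ F) (hF : (g.inputs \ F).card < f.height)
    (hw : w.length ≤ P) :
    g.PumpsDown A w f.size P ∨ ∃ B ∈ F, g.DerivesVia A B w f.size := by
  have hAF : A ∈ g.inputs \ F := Finset.mem_sdiff.2 ⟨f.root_mem_inputs, hA⟩
  have hcard := Finset.card_pos.2 ⟨A, hAF⟩
  obtain ⟨C, a, w₁, b, c, t, rfl, hr, hc, hs, hh⟩ := f.exists_child (by omega)
  have hvia : g.DerivesVia A C (a ++ w₁ ++ b) f.size :=
    ⟨a, w₁, b, c, t.size, rfl, hr, hc, t.derivesIn, by omega⟩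
  by_cases hCA : C = A
  · subst hCA
    exact .inl (hvia.pumpsDown hw)
  by_cases hCF : C ∈ F
  · exact .inr ⟨C, hCF, hvia⟩
  have hF' : (g.inputs \ insert A F).card < t.height := by
    rw [Finset.sdiff_insert, Finset.card_erase_of_mem hAF]
    omega
  have hw₁ : w₁.length ≤ P := by simp only [List.length_append] at hw; omega
  rw [← hs, Nat.add_comm]
  rcases pumpsDown_or_derivesVia (insert A F) t (by simp [hCA, hCF]) hF' hw₁
    with h | ⟨B, hB, h⟩
  · exact .inl (h.lift hr)
  · rcases Finset.mem_insert.1 hB with rfl | hB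
    · exact .inl ((h.lift hr).pumpsDown hw)
    · exact .inr ⟨B, hB, h.lift hr⟩
termination_by f.height
decreasing_by omega

theorem pumpsDown {m : ℕ} (hm : 1 ≤ m) (hrules : ∀ r ∈ g.rules, r.output.length ≤ m)
    {A : g.NT} {w : List T} (f : g.ParseForest [.nonterminal A] w)
    (hf : g.inputs.card < f.height) : g.PumpsDown A w f.size (m ^ (g.inputs.card + 1)) := by
  classical
  rcases Nat.lt_or_ge (g.inputs.card + 1) f.height with hlt | hle
  · obtain ⟨C, a, w₁, b, c, t, rfl, hr, -, hs, hh⟩ := f.exists_child (by omega)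
    rw [← hs, Nat.add_comm]
    exact (pumpsDown hm hrules t (by omega)).lift hr
  · have hw := f.length_le hm hrules
    rw [List.length_singleton, one_mul, show f.height = g.inputs.card + 1 by omega] at hw
    rcases f.pumpsDown_or_derivesVia ∅ (Finset.notMem_empty A) (by simpa using hf) hw
      with h | ⟨B, hB, -⟩
    · exact h
    · exact absurd hB (Finset.notMem_empty B)
termination_by f.height
decreasing_by omega

end ParseForest

end ContextFreeGrammar

theorem Language.IsContextFree.pumping_down {T : Type*} {L : Language T} (hL : L.IsContextFree) :
    ∃ P : ℕ, ∀ w ∈ L, P < w.length → ∃ u v x y z : List T,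
      w = u ++ v ++ x ++ y ++ z ∧ (v ++ x ++ y).length ≤ P ∧ v ++ y ≠ [] ∧
        u ++ x ++ z ∈ L := by
  classical
  obtain ⟨g, rfl⟩ := hL
  set m := g.rules.sup (·.output.length) + 1
  have hrules : ∀ r ∈ g.rules, r.output.length ≤ m :=
    fun r hr => (Finset.le_sup (f := (·.output.length)) hr).trans (Nat.le_succ _)
  refine ⟨m ^ (g.inputs.card + 1), fun w hw hlong => ?_⟩
  have hex := ((g.mem_language_iff w).1 hw).exists_derivesIn
  obtain ⟨f, hf⟩ := (Nat.find_spec hex).exists_parseForest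
  have hheight : g.inputs.card < f.height := by
    by_contra! h
    have hw := f.length_le (by omega) hrules
    rw [List.length_singleton, one_mul] at hw
    have : m ^ f.height ≤ m ^ (g.inputs.card + 1) := Nat.pow_le_pow_right (by omega) (by omega)
    omega
  obtain ⟨u, v, x, y, z, c, rfl, hvxy, hc, d⟩ := f.pumpsDown (by omega) hrules hheight
  -- `f` comes from a shortest derivation of `w`, so the deleted loop cannot be empty.
  refine ⟨u, v, x, y, z, rfl, hvxy, fun hvy => ?_, (g.mem_language_iff _).2 d.derives⟩
  obtain ⟨rfl, rfl⟩ := List.append_eq_nil_iff.1 hvy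
  exact Nat.find_min hex (hf ▸ hc) (by simpa using d)

namespace Paper

section TightPairs

variable {M : Type*} [Monoid M] {Y : Type*}

def IsGeodesic (φ : FreeMonoid Y →* M) (u : FreeMonoid Y) : Prop :=
  ∀ u', φ u' = φ u → u.length ≤ u'.length

def IsTightPair (φ : FreeMonoid Y →* M) (u x : FreeMonoid Y) : Prop :=
  φ (u * x) = 1 ∧ (∀ u', φ (u' * x) = 1 → u.length ≤ u'.length) ∧
    ∀ x', φ (u * x') = 1 → x.length ≤ x'.length

def HasLongTightPairs (φ : FreeMonoid Y →* M) : Prop :=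
  ∀ p : ℕ, ∃ u x, IsTightPair φ u x ∧ p < u.length ∧ p < x.length

variable {φ : FreeMonoid Y →* M} {u x w : FreeMonoid Y}

lemma IsTightPair.length_add_le (h : IsTightPair φ u x) (hw : φ w = 1)
    (huw : (∃ r, w = u * r) ∨ ∃ r, w = r * x) : u.length + x.length ≤ w.length := by
  rcases huw with ⟨r, rfl⟩ | ⟨r, rfl⟩
  · simpa [FreeMonoid.length_mul] using h.2.2 r hw
  · simpa [FreeMonoid.length_mul] using h.2.1 r hw

lemma exists_isGeodesic {m : M} (hm : m ∈ MonoidHom.mrange φ) :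
    ∃ u, φ u = m ∧ IsGeodesic φ u := by
  obtain ⟨u, hu, hmin⟩ := (measure FreeMonoid.length).wf.has_min {u | φ u = m} hm
  exact ⟨u, hu, fun u' hu' => not_lt.1 (hmin u' (hu'.trans hu))⟩

lemma IsGeodesic.isTightPair (hu : IsGeodesic φ u) (hx : IsGeodesic φ x)
    (hux : φ u * φ x = 1) (hxu : φ x * φ u = 1) : IsTightPair φ u x := by
  refine ⟨by rw [map_mul, hux], fun u' h => hu u' ?_, fun x' h => hx x' ?_⟩
  · rw [map_mul] at h
    calc φ u' = φ u' * (φ x * φ u) := by rw [hxu, mul_one]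
      _ = φ u := by rw [← mul_assoc, h, one_mul]
  · rw [map_mul] at h
    calc φ x' = (φ x * φ u) * φ x' := by rw [hxu, one_mul]
      _ = φ x := by rw [mul_assoc, h, mul_one]

theorem hasLongTightPairs_of_infinite_units [Finite Y] (φ : FreeMonoid Y →* M)
    [Infinite (MonoidHom.mrange φ)ˣ] : HasLongTightPairs φ := by
  intro p
  set W := (fun l => φ (FreeMonoid.ofList l)) '' {l : List Y | l.length ≤ p}
  have hW : W.Finite := (List.finite_length_le Y p).image _
  have hshort (u : FreeMonoid Y) (h : u.length ≤ p) : φ u ∈ W := ⟨u.toList, h, rfl⟩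
  let val : (MonoidHom.mrange φ)ˣ → M := fun g => (g : MonoidHom.mrange φ)
  have hval : Function.Injective val := Subtype.val_injective.comp Units.val_injective
  have hval' : Function.Injective (val ∘ (·⁻¹)) := hval.comp inv_injective
  obtain ⟨g, hg⟩ :=
    ((hW.preimage hval.injOn).union (hW.preimage hval'.injOn)).infinite_compl.nonempty
  simp only [Set.mem_compl_iff, Set.mem_union, Set.mem_preimage, not_or] at hg
  obtain ⟨u, hu, hug⟩ := exists_isGeodesic (g : MonoidHom.mrange φ).2
  obtain ⟨x, hx, hxg⟩ :=
    exists_isGeodesic ((g⁻¹ : (MonoidHom.mrange φ)ˣ) : MonoidHom.mrange φ).2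
  refine ⟨u, x, hug.isTightPair hxg ?_ ?_, ?_, ?_⟩
  · rw [hu, hx]; exact congrArg Subtype.val g.mul_inv
  · rw [hu, hx]; exact congrArg Subtype.val g.inv_mul
  · by_contra! h; exact hg.1 (hu ▸ hshort u h :)
  · by_contra! h; exact hg.2 (hx ▸ hshort x h :)

end TightPairs

section Bicyclic

variable {M : Type*} [Monoid M] {a b : M}

lemma eq_zero_of_pow_mul_pow_eq_one_s8 (hab : a * b = 1) (hba : b * a ≠ 1) {i j : ℕ}
    (h : b ^ i * a ^ j = 1) : i = 0 ∧ j = 0 := by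
  rcases i with _ | i
  · rcases j with _ | j
    · exact ⟨rfl, rfl⟩
    · rw [pow_zero, one_mul, pow_succ] at h
      exact absurd (left_inv_eq_right_inv h hab ▸ h) hba
  · rw [pow_succ', mul_assoc] at h
    exact absurd (left_inv_eq_right_inv hab h ▸ h) hba

lemma exists_lift_eq_pow_mul_pow (hab : a * b = 1) (w : FreeMonoid Bool) :
    ∃ i j : ℕ, FreeMonoid.lift (fun t => cond t a b) w = b ^ i * a ^ j ∧
      (i : ℤ) - j = w.toList.count false - w.toList.count true := by
  induction w using FreeMonoid.inductionOn' with
  | one => exact ⟨0, 0, by simp, by simp⟩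
  | of_mul t w ih =>
    obtain ⟨i, j, hw, hij⟩ := ih
    rw [map_mul, FreeMonoid.lift_eval_of, hw, FreeMonoid.toList_of_mul]
    rcases t, i with ⟨_ | _, _ | i⟩
    · exact ⟨1, j, by simp, by grind⟩
    · exact ⟨i + 2, j, by simp [pow_succ' b (i + 1), mul_assoc], by grind⟩
    · exact ⟨0, j + 1, by simp [pow_succ'], by grind⟩
    · exact ⟨i, j, by simp [pow_succ', ← mul_assoc, hab], by grind⟩

lemma count_true_eq_count_false (hab : a * b = 1) (hba : b * a ≠ 1) {w : FreeMonoid Bool}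
    (hw : FreeMonoid.lift (fun t => cond t a b) w = 1) :
    w.toList.count true = w.toList.count false := by
  obtain ⟨i, j, h, hij⟩ := exists_lift_eq_pow_mul_pow hab w
  obtain ⟨rfl, rfl⟩ := eq_zero_of_pow_mul_pow_eq_one_s8 hab hba (h ▸ hw)
  omega

theorem hasLongTightPairs_of_mul_eq_one (hab : a * b = 1) (hba : b * a ≠ 1) :
    HasLongTightPairs (FreeMonoid.lift fun t => cond t a b) := by
  intro p
  have hlen (t : Bool) : (FreeMonoid.ofList (List.replicate (p + 1) t)).length = p + 1 :=
    List.length_replicate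
  refine ⟨.ofList (List.replicate (p + 1) true), .ofList (List.replicate (p + 1) false),
    ⟨?_, fun u' h => ?_, fun x' h => ?_⟩, by rw [hlen]; omega, by rw [hlen]; omega⟩
  · simpa [FreeMonoid.lift_ofList] using pow_mul_pow_eq_one (p + 1) hab
  · have hc := count_true_eq_count_false hab hba h
    have := List.count_le_length (a := true) (l := u'.toList)
    rw [hlen]
    change _ ≤ u'.toList.length
    grind [FreeMonoid.toList_mul, FreeMonoid.toList_ofList]
  · have hc := count_true_eq_count_false hab hba h
    have := List.count_le_length (a := false) (l := x'.toList)
    rw [hlen]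
    change _ ≤ x'.toList.length
    grind [FreeMonoid.toList_mul, FreeMonoid.toList_ofList]

end Bicyclic

theorem exists_hasLongTightPairs_of_not_isFRI {M : Type*} [Monoid M] (hM : ¬ IsFRI M) :
    ∃ (Y : Type) (_ : Fintype Y) (φ : FreeMonoid Y →* M), HasLongTightPairs φ := by
  by_cases hM' : IsDedekindFiniteMonoid M
  · simp only [IsFRI, not_forall] at hM
    obtain ⟨N, ⟨S, rfl⟩, hinf⟩ := hM
    have : IsDedekindFiniteMonoid (Submonoid.closure (S : Set M)) :=
      .of_injective (Submonoid.closure (S : Set M)).subtype Subtype.val_injective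
    let s : Fin S.card → M := Subtype.val ∘ S.equivFin.symm
    have hrange : MonoidHom.mrange (FreeMonoid.lift s) = Submonoid.closure S := by
      rw [FreeMonoid.mrange_lift, EquivLike.range_comp, Subtype.range_coe_subtype]
      rfl
    have : Infinite (MonoidHom.mrange (FreeMonoid.lift s))ˣ := by
      rw [hrange, ← not_finite_iff_infinite]
      intro h
      exact hinf ((Set.finite_range Units.val).subset
        fun a ⟨b, hab⟩ => IsUnit.of_mul_eq_one b hab)
    exact ⟨_, inferInstance, _, hasLongTightPairs_of_infinite_units (FreeMonoid.lift s)⟩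
  · obtain ⟨a, b, hab, hba⟩ : ∃ a b : M, a * b = 1 ∧ b * a ≠ 1 := by
      simpa [isDedekindFiniteMonoid_iff] using hM'
    exact ⟨Bool, inferInstance, _, hasLongTightPairs_of_mul_eq_one hab hba⟩

section WordProblem

variable {M : Type*} [Monoid M]

def wordProblem {X : Type*} (Φ : FreeMonoid X →* M) : Language X :=
  {w | Φ (FreeMonoid.ofList w) = 1}

theorem va_wordProblem {X : Type} [Fintype X] (Φ : FreeMonoid X →* M) :
    VA M (wordProblem Φ) := by
  refine ⟨X, inferInstance, ⊤, Φ, MonoidHom.id _,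
    ⟨Unit, inferInstance, ⟨fun _ _ => (), (), Set.univ⟩, ?_⟩, ?_⟩
  · ext
    exact iff_of_true (Set.mem_univ _) trivial
  · ext l
    refine ⟨fun h => ⟨.ofList l, ⟨trivial, h⟩, rfl⟩, ?_⟩
    rintro ⟨w, ⟨-, hw⟩, rfl⟩
    exact hw

end WordProblem

section Product

variable {Y₀ Y₁ : Type*}

def projLeft : FreeMonoid (Y₀ ⊕ Y₁) →* FreeMonoid Y₀ := FreeMonoid.lift (Sum.elim .of 1)

def projRight : FreeMonoid (Y₀ ⊕ Y₁) →* FreeMonoid Y₁ := FreeMonoid.lift (Sum.elim 1 .of)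

@[simp] lemma projLeft_map_inl (w : FreeMonoid Y₀) :
    projLeft (FreeMonoid.map (Sum.inl : Y₀ → Y₀ ⊕ Y₁) w) = w :=
  DFunLike.congr_fun (FreeMonoid.hom_eq (f := projLeft.comp (FreeMonoid.map Sum.inl))
    (g := MonoidHom.id _) fun _ => rfl) w

@[simp] lemma projLeft_map_inr (w : FreeMonoid Y₁) :
    projLeft (FreeMonoid.map (Sum.inr : Y₁ → Y₀ ⊕ Y₁) w) = 1 :=
  DFunLike.congr_fun (FreeMonoid.hom_eq (f := projLeft.comp (FreeMonoid.map Sum.inr))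
    (g := 1) fun _ => rfl) w

@[simp] lemma projRight_map_inl (w : FreeMonoid Y₀) :
    projRight (FreeMonoid.map (Sum.inl : Y₀ → Y₀ ⊕ Y₁) w) = 1 :=
  DFunLike.congr_fun (FreeMonoid.hom_eq (f := projRight.comp (FreeMonoid.map Sum.inl))
    (g := 1) fun _ => rfl) w

@[simp] lemma projRight_map_inr (w : FreeMonoid Y₁) :
    projRight (FreeMonoid.map (Sum.inr : Y₁ → Y₀ ⊕ Y₁) w) = w :=
  DFunLike.congr_fun (FreeMonoid.hom_eq (f := projRight.comp (FreeMonoid.map Sum.inr))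
    (g := MonoidHom.id _) fun _ => rfl) w

lemma length_projLeft_add_length_projRight (w : FreeMonoid (Y₀ ⊕ Y₁)) :
    (projLeft w).length + (projRight w).length = w.length := by
  induction w using FreeMonoid.inductionOn' with
  | one => rfl
  | of_mul y w ih =>
    rcases y with y | y <;>
      simp only [projLeft, projRight, map_mul, FreeMonoid.lift_eval_of, Sum.elim_inl,
        Sum.elim_inr, Pi.one_apply, one_mul, FreeMonoid.length_mul, FreeMonoid.length_of]
        at ih ⊢ <;>
      omega

end Product

lemma exists_mul_of_short_deletion {X N : Type*} [Monoid N] (π : FreeMonoid X →* N)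
    {w₁ w₂ w₃ : FreeMonoid X} {u v x y z : List X}
    (h : (w₁ * w₂ * w₃).toList = u ++ v ++ x ++ y ++ z)
    (hvxy : (v ++ x ++ y).length ≤ w₂.length) :
    (∃ r, π (.ofList (u ++ x ++ z)) = π w₁ * r) ∨
      ∃ r, π (.ofList (u ++ x ++ z)) = r * π w₃ := by
  simp only [FreeMonoid.toList_mul] at h
  have hlen := congrArg List.length h
  simp only [List.length_append, FreeMonoid.length] at hlen hvxy
  by_cases hu : w₁.toList.length ≤ u.length
  · obtain ⟨r, rfl⟩ : w₁.toList <+: u := List.prefix_of_prefix_length_le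
      (h ▸ List.prefix_append_of_prefix (List.prefix_append _ _))
      (by simpa only [List.append_assoc] using List.prefix_append u _) hu
    exact .inl ⟨π (.ofList (r ++ x ++ z)), by simp [FreeMonoid.ofList_append]⟩
  · obtain ⟨r, rfl⟩ : w₃.toList <:+ z := List.suffix_of_suffix_length_le
      (h ▸ List.suffix_append _ _) (List.suffix_append _ _) (by omega)
    exact .inr ⟨π (.ofList (u ++ x ++ r)), by simp [FreeMonoid.ofList_append, mul_assoc]⟩

theorem not_isContextFree_wordProblem_prod {M₀ M₁ : Type*} [Monoid M₀] [Monoid M₁]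
    {Y₀ Y₁ : Type*} {φ₀ : FreeMonoid Y₀ →* M₀} {φ₁ : FreeMonoid Y₁ →* M₁}
    (h₀ : HasLongTightPairs φ₀) (h₁ : HasLongTightPairs φ₁) :
    ¬ (wordProblem ((φ₀.comp projLeft).prod (φ₁.comp projRight))).IsContextFree := by
  intro hCF
  obtain ⟨P, hP⟩ := hCF.pumping_down
  obtain ⟨u₀, x₀, ht₀, hu₀, hx₀⟩ := h₀ P
  obtain ⟨u₁, x₁, ht₁, hu₁, hx₁⟩ := h₁ P
  set ι₀ := FreeMonoid.map (Sum.inl : Y₀ → Y₀ ⊕ Y₁)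
  set ι₁ := FreeMonoid.map (Sum.inr : Y₁ → Y₀ ⊕ Y₁)
  have hι₀ (w : FreeMonoid Y₀) : (ι₀ w).length = w.length := List.length_map _
  have hι₁ (w : FreeMonoid Y₁) : (ι₁ w).length = w.length := List.length_map _
  set W := ι₀ u₀ * ι₁ u₁ * ι₀ x₀ * ι₁ x₁
  have hW : W.toList ∈ wordProblem ((φ₀.comp projLeft).prod (φ₁.comp projRight)) := by
    have e₀ : projLeft W = u₀ * x₀ := by simp [W, ι₀, ι₁]
    have e₁ : projRight W = u₁ * x₁ := by simp [W, ι₀, ι₁]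
    change (φ₀ (projLeft W), φ₁ (projRight W)) = 1
    rw [e₀, e₁, ht₀.1, ht₁.1]
    rfl
  obtain ⟨u, v, x, y, z, hsplit, hvxy, hvy, hmem⟩ := hP _ hW (by
    change P < W.length
    simp only [W, FreeMonoid.length_mul, hι₀, hι₁]
    omega)
  have k₀ := ht₀.length_add_le (congrArg Prod.fst hmem) (by
    simpa [ι₀, ι₁] using exists_mul_of_short_deletion projLeft (w₁ := ι₀ u₀)
      (w₂ := ι₁ u₁) (w₃ := ι₀ x₀ * ι₁ x₁) (by rw [← mul_assoc]; exact hsplit)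
      (by rw [hι₁]; omega))
  have k₁ := ht₁.length_add_le (congrArg Prod.snd hmem) (by
    simpa [ι₀, ι₁] using exists_mul_of_short_deletion projRight
      (w₁ := ι₀ u₀ * ι₁ u₁) (w₂ := ι₀ x₀) (w₃ := ι₁ x₁) hsplit (by rw [hι₀]; omega))
  have hs : (projLeft (.ofList (u ++ x ++ z))).length +
      (projRight (.ofList (u ++ x ++ z))).length = (u ++ x ++ z).length :=
    length_projLeft_add_length_projRight _
  have hWlen : W.length = (u ++ v ++ x ++ y ++ z).length := congrArg List.length hsplit
  have hvy' : 0 < (v ++ y).length := List.length_pos_of_ne_nil hvy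
  simp only [W, FreeMonoid.length_mul, hι₀, hι₁, List.length_append] at hs hWlen hvy'
  omega

/-- If neither `M₀` nor `M₁` is an FRI-monoid, then some language in
`VA (M₀ × M₁)` is not context-free. -/
theorem stmt8 (M₀ M₁ : Type*) [Monoid M₀] [Monoid M₁]
    (h₀ : ¬ IsFRI M₀) (h₁ : ¬ IsFRI M₁) :
    ∃ (X : Type) (_ : Fintype X) (L : Language X),
      VA (M₀ × M₁) L ∧ ¬ L.IsContextFree := by
  obtain ⟨Y₀, _, φ₀, hφ₀⟩ := exists_hasLongTightPairs_of_not_isFRI h₀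
  obtain ⟨Y₁, _, φ₁, hφ₁⟩ := exists_hasLongTightPairs_of_not_isFRI h₁
  exact ⟨Y₀ ⊕ Y₁, inferInstance, _, va_wordProblem _,
    not_isContextFree_wordProblem_prod hφ₀ hφ₁⟩

end Paper
end

section
/- Let M be a monoid such that every language in VA(M) (over every finite alphabet) is semilinear, and let ℤ denote the (multiplicatively written) group of integers. Then every language in VA(M × ℤ) is semilinear. -/
/-!
Write a run of a valence automaton over `M × ℤ` as a word `w` over its transition alphabet `Y`.
Both the `ℤ`-component of the weight of `w` and the Parikh vector of its output depend only on the
Parikh vector of `w`, through a linear form `g : ℕ^Y → ℤ` and a linear map `ℕ^Y → ℕ^X`. Hence the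
Parikh image of the language is the linear image of `P ∩ g⁻¹(0)`, where `P` is the Parikh image of
the runs whose `M`-component is `1`. Those runs form a language in `VA(M)`, so `P` is semilinear,
and semilinear sets are closed under intersection (Ginsburg–Spanier), under preimages and under
images by linear maps.
-/

namespace Paper

open Classical in
/-- The Parikh image of a word: the multiset counting occurrences of each letter. -/
noncomputable def parikh {X : Type} (w : List X) : X → ℕ := fun x => w.count x

/-- A linear subset of `X^⊕`. -/
def IsLinearSet {X : Type} (S : Set (X → ℕ)) : Prop :=
  ∃ (α₀ : X → ℕ) (n : ℕ) (α : Fin n → X → ℕ),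
    S = {β | ∃ m : Fin n → ℕ, β = α₀ + ∑ i, m i • α i}

/-- A semilinear subset of `X^⊕`: a finite union of linear sets. -/
def IsSemilinearSet {X : Type} (S : Set (X → ℕ)) : Prop :=
  ∃ (n : ℕ) (T : Fin n → Set (X → ℕ)), (∀ i, IsLinearSet (T i)) ∧ S = ⋃ i, T i

/-- A language is semilinear if its Parikh image is a semilinear set. -/
def LangSemilinear {X : Type} (L : Language X) : Prop := IsSemilinearSet (parikh '' L)

open Multiplicative

lemma isLinearSet_iff_isLinearSet {X : Type} {S : Set (X → ℕ)} :
    IsLinearSet S ↔ _root_.IsLinearSet S := by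
  rw [isLinearSet_iff_exists_fin_addMonoidHom]
  refine exists₂_congr fun α₀ n => ⟨fun ⟨α, hS⟩ => ?_, fun ⟨f, hS⟩ => ?_⟩
  · refine ⟨(Fintype.linearCombination ℕ α).toAddMonoidHom, hS.trans ?_⟩
    ext β
    simp [Set.mem_vadd_set, Fintype.linearCombination_apply, eq_comm]
  · have hf (m : Fin n → ℕ) : ∑ i, m i • f (fun j => if i = j then 1 else 0) = f m :=
      (LinearMap.pi_apply_eq_sum_univ f.toNatLinearMap m).symm
    refine ⟨fun i => f fun j => if i = j then 1 else 0, hS.trans ?_⟩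
    ext β
    simp only [Set.mem_ofPred_eq, hf]
    simp [Set.mem_vadd_set, eq_comm]

lemma isSemilinearSet_iff_isSemilinearSet {X : Type} {S : Set (X → ℕ)} :
    IsSemilinearSet S ↔ _root_.IsSemilinearSet S := by
  simp_rw [IsSemilinearSet, isLinearSet_iff_isLinearSet]
  constructor
  · rintro ⟨n, T, hT, rfl⟩
    exact ⟨Set.range T, Set.finite_range T, Set.forall_mem_range.2 hT, (Set.sUnion_range T).symm⟩
  · rintro ⟨𝒯, h𝒯, hT, rfl⟩
    obtain ⟨n, T, rfl⟩ := h𝒯.fin_embedding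
    exact ⟨n, T, fun i => hT _ (Set.mem_range_self i), Set.sUnion_range T⟩

lemma langSemilinear_iff {X : Type} {L : Language X} :
    LangSemilinear L ↔ _root_.IsSemilinearSet (parikh '' L) :=
  isSemilinearSet_iff_isSemilinearSet

section Parikh

variable {X Y : Type}

lemma parikh_nil : parikh ([] : List Y) = 0 := by
  funext y
  simp [parikh]

lemma parikh_append (l₁ l₂ : List Y) : parikh (l₁ ++ l₂) = parikh l₁ + parikh l₂ := by
  funext y
  simp [parikh, List.count_append]

open Classical in
lemma parikh_singleton (y : Y) : parikh [y] = Pi.single y 1 := by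
  funext z
  rcases eq_or_ne z y with rfl | hzy
  · simp [parikh]
  · simp [parikh, hzy.symm]

noncomputable def parikhHom : FreeMonoid Y →* Multiplicative (Y → ℕ) where
  toFun w := ofAdd (parikh w.toList)
  map_one' := by simp [parikh_nil]
  map_mul' v w := by simp [parikh_append]

lemma toAdd_apply_eq_linearCombination_parikh [Fintype Y] {A : Type*} [AddCommMonoid A]
    (F : FreeMonoid Y →* Multiplicative A) (w : FreeMonoid Y) :
    toAdd (F w) = Fintype.linearCombination ℕ (fun y => toAdd (F (.of y))) (parikh w.toList) := by
  classical
  let c : (Y → ℕ) →+ A := (Fintype.linearCombination ℕ fun y => toAdd (F (.of y))).toAddMonoidHom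
  have hF : F = c.toMultiplicative.comp parikhHom := FreeMonoid.hom_eq fun y => by
    simp [c, parikhHom, parikh_singleton, Fintype.linearCombination_apply_single]
  exact congrArg toAdd (DFunLike.congr_fun hF w)

lemma parikh_toList_eq_linearCombination [Fintype Y] (h : FreeMonoid Y →* FreeMonoid X)
    (w : FreeMonoid Y) :
    parikh (h w).toList =
      Fintype.linearCombination ℕ (fun y => parikh (h (.of y)).toList) (parikh w.toList) :=
  toAdd_apply_eq_linearCombination_parikh (parikhHom.comp h) w

end Parikh

lemma parikh_image_prod_int_eq {M : Type*} {X Y : Type} [Monoid M] [Fintype Y] (R : Language Y)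
    (φ : FreeMonoid Y →* M × Multiplicative ℤ) (h : FreeMonoid Y →* FreeMonoid X) :
    parikh '' ((fun w => (h w).toList) '' {w | w.toList ∈ R ∧ φ w = 1}) =
      Fintype.linearCombination ℕ (fun y => parikh (h (.of y)).toList) ''
        (parikh '' (FreeMonoid.toList '' {w | w.toList ∈ R ∧ (φ w).1 = 1}) ∩
          Fintype.linearCombination ℕ (fun y => toAdd (φ (.of y)).2) ⁻¹' {0}) := by
  set La := Fintype.linearCombination ℕ (fun y => parikh (h (.of y)).toList)
  set g := Fintype.linearCombination ℕ (fun y => toAdd (φ (.of y)).2)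
  have hsnd (w : FreeMonoid Y) : toAdd (φ w).2 = g (parikh w.toList) :=
    toAdd_apply_eq_linearCombination_parikh ((MonoidHom.snd _ _).comp φ) w
  calc parikh '' ((fun w => (h w).toList) '' {w | w.toList ∈ R ∧ φ w = 1})
      = (fun w => La (parikh w.toList)) ''
          ({w | w.toList ∈ R ∧ (φ w).1 = 1} ∩ (fun w => g (parikh w.toList)) ⁻¹' {0}) := by
        rw [Set.image_image]
        congr 1
        · exact funext fun w => parikh_toList_eq_linearCombination h w
        · ext w
          simp [Prod.ext_iff, ← hsnd, and_assoc]
    _ = _ := by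
        rw [Set.image_image parikh, ← Set.image_image La, ← Set.image_inter_preimage]
        rfl

/-- If every language in `VA M` is semilinear, then every language in
`VA (M × ℤ)` is semilinear (with `ℤ` written multiplicatively). -/
theorem stmt10 (M : Type*) [Monoid M]
    (hM : ∀ (X : Type) (_ : Fintype X) (L : Language X), VA M L → LangSemilinear L) :
    ∀ (X : Type) (_ : Fintype X) (L : Language X),
      VA (M × Multiplicative ℤ) L → LangSemilinear L := by
  rintro X _ L ⟨Y, hY, R, φ, h, hR, rfl⟩
  have hP : _root_.IsSemilinearSet
      (parikh '' (FreeMonoid.toList '' {w | w.toList ∈ R ∧ (φ w).1 = 1})) :=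
    langSemilinear_iff.1 <|
      hM Y hY _ ⟨Y, hY, R, (MonoidHom.fst _ _).comp φ, MonoidHom.id _, hR, rfl⟩
  refine langSemilinear_iff.2 ?_
  rw [parikh_image_prod_int_eq]
  exact (hP.inter ((IsSemilinearSet.singleton 0).preimage _)).image _

end Paper
end

section
/- Let N₀, N₁, M₀, M₁ be monoids such that for each i ∈ {0,1} and every finite alphabet X, every language over X in VA(N_i) also lies in VA(M_i). Then for every finite alphabet X, every language over X in VA(N₀ × N₁) also lies in VA(M₀ × M₁). -/
/-!
Write `L = h(R ∩ φ⁻¹(1))` with `φ = (φ₀, φ₁) : Y* → N₀ × N₁`. The language `K = R ∩ φ₀⁻¹(1)`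
over `Y` lies in `VA(N₀)`, hence in `VA(M₀)`, say `K = g(R' ∩ ψ⁻¹(1))`; then
`L = h g (R' ∩ (ψ, φ₁ g)⁻¹(1))` lies in `VA(M₀ × N₁)`. Exchanging the factors and repeating the
argument on the other coordinate gives `L ∈ VA(M₀ × M₁)`.
-/

namespace Paper

open FreeMonoid

def valenceLanguage {M : Type*} [Monoid M] {X Y : Type} (R : Language Y)
    (φ : FreeMonoid Y →* M) (h : FreeMonoid Y →* FreeMonoid X) : Language X :=
  (fun w => toList (h w)) '' {w : FreeMonoid Y | toList w ∈ R ∧ φ w = 1}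

section

variable {M M' P : Type*} [Monoid M] [Monoid M'] [Monoid P] {X Y : Type}

theorem VA.of_mulEquiv (e : M ≃* M') {L : Language X} (hL : VA M L) : VA M' L := by
  obtain ⟨Y, fY, R, φ, h, hR, rfl⟩ := hL
  refine ⟨Y, fY, R, e.toMonoidHom.comp φ, h, hR, ?_⟩
  simp only [MonoidHom.coe_comp, MulEquiv.coe_toMonoidHom, Function.comp_apply,
    MulEquivClass.map_eq_one_iff]
  rfl

theorem VA.prod_comm {L : Language X} (hL : VA (M × P) L) : VA (P × M) L :=
  hL.of_mulEquiv (MulEquiv.prodComm)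

theorem VA.inter_ker [Fintype Y] {R : Language Y} (hR : R.IsRegular) (φ : FreeMonoid Y →* M) :
    VA M {l | l ∈ R ∧ φ (ofList l) = 1} := by
  refine ⟨Y, inferInstance, R, φ, MonoidHom.id _, hR, ?_⟩
  ext l
  constructor
  · rintro ⟨hlR, hl1⟩
    exact ⟨ofList l, ⟨hlR, hl1⟩, rfl⟩
  · rintro ⟨w, hw, rfl⟩
    exact hw

theorem VA.valenceLanguage_prod {K : Language Y} (hK : VA M K) (θ : FreeMonoid Y →* P)
    (h : FreeMonoid Y →* FreeMonoid X) : VA (M × P) (valenceLanguage K θ h) := by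
  obtain ⟨Z, fZ, R, ψ, g, hR, rfl⟩ := hK
  refine ⟨Z, fZ, R, ψ.prod (θ.comp g), h.comp g, hR, ?_⟩
  ext x
  simp only [MonoidHom.prod_apply, MonoidHom.coe_comp, Function.comp_apply, Prod.mk_eq_one]
  constructor
  · rintro ⟨_, ⟨⟨u, hu, hgu⟩, hθ⟩, rfl⟩
    obtain rfl := toList.injective hgu
    exact ⟨u, ⟨hu.1, hu.2, hθ⟩, rfl⟩
  · rintro ⟨u, ⟨huR, hψ, hθ⟩, rfl⟩
    exact ⟨g u, ⟨⟨u, ⟨huR, hψ⟩, rfl⟩, hθ⟩, rfl⟩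

theorem VA.prod_left_of_forall
    (hMM' : ∀ (Y : Type) (_ : Fintype Y) (K : Language Y), VA M K → VA M' K)
    {L : Language X} (hL : VA (M × P) L) : VA (M' × P) L := by
  obtain ⟨Y, fY, R, φ, h, hR, rfl⟩ := hL
  have hK := hMM' Y fY _ (VA.inter_ker hR ((MonoidHom.fst M P).comp φ))
  have hL : valenceLanguage R φ h = valenceLanguage
      {l | l ∈ R ∧ (MonoidHom.fst M P).comp φ (ofList l) = 1} ((MonoidHom.snd M P).comp φ) h := by
    unfold valenceLanguage
    congr 1
    ext w
    simp only [Set.mem_ofPred_eq, MonoidHom.coe_comp, Function.comp_apply, MonoidHom.coe_fst,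
      MonoidHom.coe_snd, Prod.ext_iff, Prod.fst_one, Prod.snd_one]
    exact and_assoc.symm
  change VA _ (valenceLanguage R φ h)
  rw [hL]
  exact hK.valenceLanguage_prod _ h

end

/-- If `VA N_i ⊆ VA M_i` for `i ∈ {0,1}`, then
`VA (N₀ × N₁) ⊆ VA (M₀ × M₁)`. -/
theorem stmt11 (N₀ N₁ M₀ M₁ : Type*) [Monoid N₀] [Monoid N₁] [Monoid M₀] [Monoid M₁]
    (h₀ : ∀ (X : Type) (_ : Fintype X) (L : Language X), VA N₀ L → VA M₀ L)
    (h₁ : ∀ (X : Type) (_ : Fintype X) (L : Language X), VA N₁ L → VA M₁ L) :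
    ∀ (X : Type) (_ : Fintype X) (L : Language X),
      VA (N₀ × N₁) L → VA (M₀ × M₁) L := by
  intro X _ L hL
  have hL₀ : VA (M₀ × N₁) L := hL.prod_left_of_forall h₀
  exact (hL₀.prod_comm.prod_left_of_forall h₁).prod_comm

end Paper
end

section
/- Let F₂ denote the free group on two generators. There exist a finite alphabet X and a language L ⊆ X* with L ∈ VA(F₂ × F₂) such that the Parikh image Ψ(L) is not semilinear. -/
namespace Paper

/-!
Over `F₂ = ⟨a, x⟩`, a product `∏ᵢ a x^{mᵢ} x^{-nᵢ}` equals `a^r` only if `mᵢ = nᵢ` for all `i`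
and `r` is the number of factors: in `ℤ ≀ ℤ`, with `a` moving the head and `x` incrementing the
cell under it, the product writes `mᵢ - nᵢ` into cell `i`. A valence automaton over `F₂ × F₂`
reading `s (u^{m₁} p v^{n₁} q) ⋯ (u^{m_N} p v^{n_N} q) u^j c^k e^r` can thus check two interleaved
families of equalities: `mᵢ = nᵢ` and `j = k` in the first factor, `1 = m₁`, `2nᵢ = mᵢ₊₁` and
`2n_N = j` in the second. Then `k = 2^N`, so keeping only the letters `c` gives `{c^{2^N}}`.
This is not semilinear: an infinite semilinear set contains an infinite arithmetic progression,
but no three powers of two are in arithmetic progression.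
-/

theorem IsLinearSet.exists_add_nsmul_mem {X : Type} {S : Set (X → ℕ)} (hS : IsLinearSet S)
    (hinf : S.Infinite) : ∃ β α, α ≠ 0 ∧ ∀ m : ℕ, β + m • α ∈ S := by
  obtain ⟨β, n, α, rfl⟩ := hS
  by_cases hα : ∃ i, α i ≠ 0
  swap
  · refine absurd ((Set.finite_singleton β).subset ?_) hinf
    rintro _ ⟨m, rfl⟩
    simp_all
  obtain ⟨i, hi⟩ := hα
  refine ⟨β, α i, hi, fun m => ⟨Pi.single i m, ?_⟩⟩
  rw [Finset.sum_eq_single i (fun k _ hk => by simp [Pi.single_eq_of_ne hk]) (by simp)]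
  simp

theorem IsSemilinearSet.exists_add_nsmul_mem {X : Type} {S : Set (X → ℕ)}
    (hS : IsSemilinearSet S) (hinf : S.Infinite) : ∃ β α, α ≠ 0 ∧ ∀ m : ℕ, β + m • α ∈ S := by
  obtain ⟨n, T, hT, rfl⟩ := hS
  obtain ⟨i, hi⟩ : ∃ i, (T i).Infinite := by
    by_contra! h
    exact hinf (Set.finite_iUnion h)
  obtain ⟨β, α, hα, hmem⟩ := (hT i).exists_add_nsmul_mem hi
  exact ⟨β, α, hα, fun m => Set.mem_iUnion.2 ⟨i, hmem m⟩⟩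

theorem not_three_term_progression_two_pow {u d i j k : ℕ} (hd : 0 < d) (hi : 2 ^ i = u)
    (hj : 2 ^ j = u + d) (hk : 2 ^ k = u + 2 * d) : False := by
  have hjk : j < k := (Nat.pow_lt_pow_iff_right (show 1 < 2 by norm_num)).1 (by omega)
  have : 2 ^ (j + 1) ≤ 2 ^ k := Nat.pow_le_pow_right (by norm_num) hjk
  have : 0 < 2 ^ i := Nat.two_pow_pos i
  rw [pow_succ] at *
  omega

theorem not_isSemilinearSet_range_two_pow :
    ¬ IsSemilinearSet (Set.range fun n : ℕ => fun _ : Unit => 2 ^ n) := by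
  intro hS
  have hinf : (Set.range fun n : ℕ => fun _ : Unit => 2 ^ n).Infinite :=
    Set.infinite_range_of_injective fun m n h => Nat.pow_right_injective le_rfl (congrFun h ())
  obtain ⟨β, α, hα, hmem⟩ := hS.exists_add_nsmul_mem hinf
  have hd : 0 < α () := Nat.pos_of_ne_zero fun h => hα (funext fun _ => h)
  obtain ⟨i, hi⟩ := hmem 0
  obtain ⟨j, hj⟩ := hmem 1
  obtain ⟨k, hk⟩ := hmem 2
  exact not_three_term_progression_two_pow hd (by simpa using congrFun hi ())
    (by simpa using congrFun hj ()) (by simpa using congrFun hk ())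

theorem mul_prod_map_mul_eq_prod_map_mul_mul {M ι : Type*} [Monoid M] (a : M) (f : ι → M)
    (l : List ι) : a * (l.map fun i => f i * a).prod = (l.map fun i => a * f i).prod * a := by
  induction l with
  | nil => simp
  | cons i l ih => simp only [List.map_cons, List.prod_cons, ← ih, mul_assoc]

theorem _root_.FreeMonoid.toList_of_pow {α : Type*} (y : α) (n : ℕ) :
    FreeMonoid.toList (FreeMonoid.of y ^ n) = List.replicate n y := by
  induction n with
  | zero => rfl
  | succ n ih =>
    rw [pow_succ, FreeMonoid.toList_mul, ih, FreeMonoid.toList_of, List.replicate_succ']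

theorem _root_.DFA.evalFrom_replicate {α σ : Type*} (M : DFA α σ) {s : σ} {y : α}
    (h : M.step s y = s) (n : ℕ) : M.evalFrom s (List.replicate n y) = s := by
  induction n with
  | zero => rfl
  | succ n ih => rw [List.replicate_succ, DFA.evalFrom_cons, h, ih]

section TestProd

variable {G H : Type*} [Group G] [Group H]

def testProd (a x : G) (ps : List (ℕ × ℕ)) : G :=
  (ps.map fun p => a * x ^ p.1 * x⁻¹ ^ p.2).prod

theorem testProd_cons (a x : G) (p : ℕ × ℕ) (ps : List (ℕ × ℕ)) :
    testProd a x (p :: ps) = a * x ^ p.1 * x⁻¹ ^ p.2 * testProd a x ps := List.prod_cons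

theorem testProd_of_forall_eq (a x : G) {ps : List (ℕ × ℕ)} (h : ∀ p ∈ ps, p.1 = p.2) :
    testProd a x ps = a ^ ps.length := by
  have hfactor : ∀ p ∈ ps, a * x ^ p.1 * x⁻¹ ^ p.2 = a := fun p hp => by
    rw [h p hp, inv_pow, mul_inv_cancel_right]
  rw [testProd, List.map_congr_left hfactor, List.map_const', List.prod_replicate]

theorem map_testProd (f : G →* H) (a x : G) (ps : List (ℕ × ℕ)) :
    f (testProd a x ps) = testProd (f a) (f x) ps := by
  simp [testProd, map_list_prod, Function.comp_def]

end TestProd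

/-- The unrestricted wreath product `ℤ ≀ ℤ`. -/
@[ext] structure Lamplighter where
  tape : ℤ → ℤ
  head : ℤ

namespace Lamplighter

instance : Mul Lamplighter :=
  ⟨fun g h => ⟨fun n => g.tape n + h.tape (n - g.head), g.head + h.head⟩⟩
instance : One Lamplighter := ⟨⟨0, 0⟩⟩
instance : Inv Lamplighter := ⟨fun g => ⟨fun n => -g.tape (n + g.head), -g.head⟩⟩

@[simp] theorem mul_tape (g h : Lamplighter) (n : ℤ) :
    (g * h).tape n = g.tape n + h.tape (n - g.head) := rfl
@[simp] theorem mul_head (g h : Lamplighter) : (g * h).head = g.head + h.head := rfl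
@[simp] theorem one_tape : (1 : Lamplighter).tape = 0 := rfl
@[simp] theorem one_head : (1 : Lamplighter).head = 0 := rfl
@[simp] theorem inv_tape (g : Lamplighter) (n : ℤ) : g⁻¹.tape n = -g.tape (n + g.head) := rfl
@[simp] theorem inv_head (g : Lamplighter) : g⁻¹.head = -g.head := rfl

instance : Group Lamplighter where
  mul_assoc _ _ _ := by ext <;> simp [sub_sub, add_assoc]
  one_mul _ := by ext <;> simp
  mul_one _ := by ext <;> simp
  inv_mul_cancel _ := by ext <;> simp

def move : Lamplighter := ⟨0, 1⟩

def bump : Lamplighter := ⟨Pi.single 0 1, 0⟩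

theorem move_pow (r : ℕ) : move ^ r = ⟨0, r⟩ := by
  induction r with
  | zero => rfl
  | succ r ih => rw [pow_succ, ih]; ext <;> simp [move]

theorem bump_pow (m : ℕ) : bump ^ m = ⟨Pi.single 0 m, 0⟩ := by
  induction m with
  | zero => ext <;> simp
  | succ m ih => rw [pow_succ, ih]; ext <;> simp [bump, Pi.single_add]

theorem move_mul_bump_pow_mul_inv_pow (m n : ℕ) :
    move * bump ^ m * bump⁻¹ ^ n = ⟨Pi.single 1 ((m : ℤ) - n), 1⟩ := by
  ext k
  · simp only [move, bump_pow, inv_pow, mul_tape, inv_tape, Pi.zero_apply, Pi.single_apply,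
      sub_eq_zero, zero_add, add_zero, mul_head]
    split_ifs <;> ring
  · simp [inv_pow, bump_pow, move]

theorem testProd_head (ps : List (ℕ × ℕ)) : (testProd move bump ps).head = ps.length := by
  induction ps with
  | nil => rfl
  | cons p ps ih =>
    rw [testProd_cons, mul_head, move_mul_bump_pow_mul_inv_pow, ih]
    simp [add_comm]

theorem testProd_tape_cons (p : ℕ × ℕ) (ps : List (ℕ × ℕ)) (n : ℤ) :
    (testProd move bump (p :: ps)).tape n =
      (Pi.single 1 ((p.1 : ℤ) - p.2) : ℤ → ℤ) n + (testProd move bump ps).tape (n - 1) := by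
  rw [testProd_cons, mul_tape, move_mul_bump_pow_mul_inv_pow]

theorem testProd_tape_of_nonpos (ps : List (ℕ × ℕ)) {n : ℤ} (hn : n ≤ 0) :
    (testProd move bump ps).tape n = 0 := by
  induction ps generalizing n with
  | nil => rfl
  | cons p ps ih =>
    rw [testProd_tape_cons, ih (by omega), Pi.single_eq_of_ne (by omega), add_zero]

theorem forall_eq_of_testProd_tape_eq_zero {ps : List (ℕ × ℕ)}
    (h : (testProd move bump ps).tape = 0) : ∀ p ∈ ps, p.1 = p.2 := by
  induction ps with
  | nil => simp
  | cons p ps ih =>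
    have hp : (p.1 : ℤ) - p.2 = 0 := by
      simpa [testProd_tape_of_nonpos] using (testProd_tape_cons p ps 1).symm.trans (congrFun h 1)
    have hps : (testProd move bump ps).tape = 0 := funext fun n => by
      simpa [hp] using (testProd_tape_cons p ps (n + 1)).symm.trans (congrFun h (n + 1))
    rw [sub_eq_zero, Nat.cast_inj] at hp
    exact List.forall_mem_cons.2 ⟨hp, ih hps⟩

end Lamplighter

theorem _root_.FreeGroup.testProd_of_eq_pow_iff {α : Type*} {i j : α} (hij : i ≠ j)
    {ps : List (ℕ × ℕ)} {r : ℕ} :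
    testProd (FreeGroup.of i) (FreeGroup.of j) ps = FreeGroup.of i ^ r ↔
      (∀ p ∈ ps, p.1 = p.2) ∧ r = ps.length := by
  classical
  refine ⟨fun h => ?_, fun ⟨hps, hr⟩ => hr ▸ testProd_of_forall_eq _ _ hps⟩
  let ρ : FreeGroup α →* Lamplighter :=
    FreeGroup.lift fun k => if k = i then Lamplighter.move else Lamplighter.bump
  have hρ := congrArg ρ h
  rw [map_testProd, map_pow] at hρ
  simp only [ρ, FreeGroup.lift_apply_of, ↓reduceIte, if_neg hij.symm, Lamplighter.move_pow] at hρ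
  refine ⟨Lamplighter.forall_eq_of_testProd_tape_eq_zero (congrArg Lamplighter.tape hρ), ?_⟩
  have hhead : (ps.length : ℤ) = r := by
    rw [← Lamplighter.testProd_head, hρ]
  exact_mod_cast hhead.symm

inductive Letter | s | u | p | v | q | c | e
  deriving DecidableEq

instance : Fintype Letter :=
  ⟨{.s, .u, .p, .v, .q, .c, .e}, fun y => by cases y <;> simp⟩

section Words

open FreeMonoid (of)

def block (z : ℕ × ℕ) : FreeMonoid Letter := of .u ^ z.1 * of .p * of .v ^ z.2 * of .q

def blocks (l : List (ℕ × ℕ)) : FreeMonoid Letter := of .s * (l.map block).prod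

def word (l : List (ℕ × ℕ)) (j k r : ℕ) : FreeMonoid Letter :=
  blocks l * of .u ^ j * of .c ^ k * of .e ^ r

theorem blocks_append_singleton (l : List (ℕ × ℕ)) (z : ℕ × ℕ) :
    blocks (l ++ [z]) = blocks l * block z := by
  simp [blocks, mul_assoc]

end Words

section Evaluation

variable {G : Type*} [Group G] (a x : G)

def img₁ : Letter → G
  | .s => a | .u => x | .p => 1 | .v => x⁻¹ | .q => a | .c => x⁻¹ | .e => a⁻¹

def img₂ : Letter → G
  | .s => a * x | .u => x⁻¹ | .p => a | .v => x ^ 2 | .q => 1 | .c => 1 | .e => a⁻¹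

def secondTests : ℕ → List (ℕ × ℕ) → ℕ → List (ℕ × ℕ)
  | s, [], j => [(s, j)]
  | s, z :: l, j => (s, z.1) :: secondTests (2 * z.2) l j

theorem length_secondTests (s : ℕ) (l : List (ℕ × ℕ)) (j : ℕ) :
    (secondTests s l j).length = l.length + 1 := by
  induction l generalizing s with
  | nil => rfl
  | cons z l ih => simp [secondTests, ih]

theorem lift_img₁_word (l : List (ℕ × ℕ)) (j k r : ℕ) :
    FreeMonoid.lift (img₁ a x) (word l j k r) = testProd a x (l ++ [(j, k)]) * (a ^ r)⁻¹ := by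
  have hblock (z : ℕ × ℕ) : FreeMonoid.lift (img₁ a x) (block z) = x ^ z.1 * x⁻¹ ^ z.2 * a := by
    simp [block, img₁]
  simp only [word, blocks, map_mul, map_pow, map_list_prod, List.map_map, Function.comp_def,
    hblock, FreeMonoid.lift_eval_of, img₁, testProd]
  rw [mul_prod_map_mul_eq_prod_map_mul_mul, List.map_append, List.prod_append]
  simp [inv_pow, mul_assoc]

theorem lift_img₂_blocks (s : ℕ) (l : List (ℕ × ℕ)) (j : ℕ) :
    a * x ^ s * FreeMonoid.lift (img₂ a x) ((l.map block).prod * FreeMonoid.of .u ^ j) =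
      testProd a x (secondTests s l j) := by
  induction l generalizing s with
  | nil => simp [secondTests, testProd, img₂]
  | cons z l ih =>
    rw [secondTests, testProd_cons, ← ih]
    simp [block, img₂, ← pow_mul, mul_assoc]

theorem lift_img₂_word (l : List (ℕ × ℕ)) (j k r : ℕ) :
    FreeMonoid.lift (img₂ a x) (word l j k r) = testProd a x (secondTests 1 l j) * (a ^ r)⁻¹ := by
  rw [← lift_img₂_blocks]
  simp [word, blocks, img₂, inv_pow, mul_assoc]

end Evaluation

def valence : FreeMonoid Letter →* FreeGroup (Fin 2) × FreeGroup (Fin 2) :=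
  (FreeMonoid.lift (img₁ (.of 0) (.of 1))).prod (FreeMonoid.lift (img₂ (.of 0) (.of 1)))

theorem valence_word_eq_one_iff {l : List (ℕ × ℕ)} {j k r : ℕ} :
    valence (word l j k r) = 1 ↔
      (∀ z ∈ l ++ [(j, k)], z.1 = z.2) ∧ (∀ z ∈ secondTests 1 l j, z.1 = z.2) ∧
        r = l.length + 1 := by
  have h01 : (0 : Fin 2) ≠ 1 := by decide
  rw [valence, Prod.ext_iff, MonoidHom.prod_apply, lift_img₁_word, lift_img₂_word,
    Prod.fst_one, Prod.snd_one, mul_inv_eq_one, mul_inv_eq_one,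
    FreeGroup.testProd_of_eq_pow_iff h01, FreeGroup.testProd_of_eq_pow_iff h01,
    length_secondTests, List.length_append, List.length_singleton]
  tauto

theorem eq_mul_two_pow_of_tests {s j k : ℕ} {l : List (ℕ × ℕ)}
    (h₁ : ∀ z ∈ l ++ [(j, k)], z.1 = z.2) (h₂ : ∀ z ∈ secondTests s l j, z.1 = z.2) :
    k = s * 2 ^ l.length := by
  induction l generalizing s with
  | nil => simp_all [secondTests]
  | cons z l ih =>
    simp only [List.cons_append, List.forall_mem_cons, secondTests] at h₁ h₂
    rw [ih h₁.2 h₂.2, List.length_cons, pow_succ, ← h₁.1, ← h₂.1]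
    ring

def doubling : ℕ → ℕ → List (ℕ × ℕ)
  | _, 0 => []
  | s, n + 1 => (s, s) :: doubling (2 * s) n

theorem length_doubling (s n : ℕ) : (doubling s n).length = n := by
  induction n generalizing s with
  | zero => rfl
  | succ n ih => simp [doubling, ih]

theorem tests_doubling (s n : ℕ) :
    (∀ z ∈ doubling s n ++ [(s * 2 ^ n, s * 2 ^ n)], z.1 = z.2) ∧
      ∀ z ∈ secondTests s (doubling s n) (s * 2 ^ n), z.1 = z.2 := by
  induction n generalizing s with
  | zero => simp [doubling, secondTests]
  | succ n ih =>
    have h : 2 * s * 2 ^ n = s * 2 ^ (n + 1) := by ring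
    simpa [doubling, secondTests, h] using ih (2 * s)

inductive Phase | init | readU | readV | readC | readE | dead
  deriving DecidableEq

instance : Fintype Phase :=
  ⟨{.init, .readU, .readV, .readC, .readE, .dead}, fun y => by cases y <;> simp⟩

def step : Phase → Letter → Phase
  | .init, .s => .readU
  | .readU, .u => .readU
  | .readU, .p => .readV
  | .readV, .v => .readV
  | .readV, .q => .readU
  | .readU, .c => .readC
  | .readC, .c => .readC
  | .readC, .e => .readE
  | .readE, .e => .readE
  | _, _ => .dead

def wordDFA : DFA Letter Phase := ⟨step, .init, {.readE}⟩

theorem wordDFA_step : wordDFA.step = step := rfl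

section Recognition

open FreeMonoid (of)

def Shape : Phase → FreeMonoid Letter → Prop
  | .init, w => w = 1
  | .readU, w => ∃ l j, w = blocks l * of .u ^ j
  | .readV, w => ∃ l m n, w = blocks l * of .u ^ m * of .p * of .v ^ n
  | .readC, w => ∃ l j k, w = blocks l * of .u ^ j * of .c ^ (k + 1)
  | .readE, w => ∃ l j k r, w = word l j (k + 1) (r + 1)
  | .dead, _ => True

theorem shape_evalFrom (w : List Letter) :
    Shape (wordDFA.evalFrom .init w) (FreeMonoid.ofList w) := by
  induction w using List.reverseRecOn with
  | nil => rfl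
  | append_singleton w y ih =>
    rw [DFA.evalFrom_append_singleton, FreeMonoid.ofList_append, FreeMonoid.ofList_singleton]
    generalize wordDFA.evalFrom .init w = st at ih
    generalize FreeMonoid.ofList w = w at ih
    cases st <;> cases y <;> simp only [wordDFA, step, Shape] at ih ⊢
    case init.s => exact ⟨[], 0, by simp [ih, blocks]⟩
    case readU.u =>
      obtain ⟨l, j, rfl⟩ := ih
      exact ⟨l, j + 1, by rw [pow_succ, mul_assoc]⟩
    case readU.p =>
      obtain ⟨l, j, rfl⟩ := ih
      exact ⟨l, j, 0, by simp⟩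
    case readU.c =>
      obtain ⟨l, j, rfl⟩ := ih
      exact ⟨l, j, 0, by simp⟩
    case readV.v =>
      obtain ⟨l, m, n, rfl⟩ := ih
      exact ⟨l, m, n + 1, by rw [pow_succ, mul_assoc]⟩
    case readV.q =>
      obtain ⟨l, m, n, rfl⟩ := ih
      exact ⟨l ++ [(m, n)], 0, by simp [blocks_append_singleton, block, mul_assoc]⟩
    case readC.c =>
      obtain ⟨l, j, k, rfl⟩ := ih
      exact ⟨l, j, k + 1, by rw [pow_succ _ (k + 1), mul_assoc]⟩
    case readC.e =>
      obtain ⟨l, j, k, rfl⟩ := ih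
      exact ⟨l, j, k, 0, by simp [word]⟩
    case readE.e =>
      obtain ⟨l, j, k, r, rfl⟩ := ih
      exact ⟨l, j, k, r + 1, by rw [word, word, pow_succ _ (r + 1), mul_assoc]⟩

end Recognition

theorem eq_word_of_mem_accepts {w : FreeMonoid Letter}
    (hw : FreeMonoid.toList w ∈ wordDFA.accepts) : ∃ l j k r, w = word l j (k + 1) (r + 1) := by
  have hshape : Shape (wordDFA.eval w.toList) w := shape_evalFrom w.toList
  rwa [show wordDFA.eval w.toList = .readE from hw] at hshape

theorem evalFrom_blocks (l : List (ℕ × ℕ)) :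
    wordDFA.evalFrom .init (FreeMonoid.toList (blocks l)) = .readU := by
  have hblock (z : ℕ × ℕ) : wordDFA.evalFrom .readU (FreeMonoid.toList (block z)) = .readU := by
    simp only [block, FreeMonoid.toList_mul, FreeMonoid.toList_of, FreeMonoid.toList_of_pow,
      DFA.evalFrom_of_append, DFA.evalFrom_singleton, wordDFA_step, step,
      wordDFA.evalFrom_replicate (s := .readU) (y := .u) rfl,
      wordDFA.evalFrom_replicate (s := .readV) (y := .v) rfl]
  induction l using List.reverseRecOn with
  | nil => rfl
  | append_singleton l z ih =>
    rw [blocks_append_singleton, FreeMonoid.toList_mul, DFA.evalFrom_of_append, ih, hblock]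

theorem word_mem_accepts (l : List (ℕ × ℕ)) (j k r : ℕ) :
    FreeMonoid.toList (word l j (k + 1) (r + 1)) ∈ wordDFA.accepts := by
  have hstart : wordDFA.start = .init := rfl
  simp only [DFA.mem_accepts, DFA.eval, hstart, word, FreeMonoid.toList_mul,
    DFA.evalFrom_of_append, evalFrom_blocks, FreeMonoid.toList_of_pow, List.replicate_succ,
    DFA.evalFrom_cons, wordDFA_step, step,
    wordDFA.evalFrom_replicate (s := .readU) (y := .u) rfl,
    wordDFA.evalFrom_replicate (s := .readC) (y := .c) rfl,
    wordDFA.evalFrom_replicate (s := .readE) (y := .e) rfl]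
  rfl

def output : FreeMonoid Letter →* FreeMonoid Unit :=
  FreeMonoid.lift fun
    | .c => FreeMonoid.of ()
    | _ => 1

theorem output_word (l : List (ℕ × ℕ)) (j k r : ℕ) :
    output (word l j k r) = FreeMonoid.of () ^ k := by
  simp [output, word, blocks, block, map_list_prod, Function.comp_def]

theorem parikh_toList_of_unit_pow (k : ℕ) :
    parikh (FreeMonoid.toList (FreeMonoid.of () ^ k)) = fun _ => k := by
  funext
  simp [parikh, FreeMonoid.toList_of_pow]

def twoPowLanguage : Language Unit :=
  (fun w => FreeMonoid.toList (output w)) ''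
    {w | FreeMonoid.toList w ∈ wordDFA.accepts ∧ valence w = 1}

theorem parikh_image_twoPowLanguage :
    parikh '' twoPowLanguage = Set.range fun n : ℕ => fun _ : Unit => 2 ^ n := by
  ext β
  constructor
  · rintro ⟨_, ⟨w, ⟨hR, hφ⟩, rfl⟩, rfl⟩
    obtain ⟨l, j, k, r, rfl⟩ := eq_word_of_mem_accepts hR
    obtain ⟨h₁, h₂, -⟩ := valence_word_eq_one_iff.1 hφ
    refine ⟨l.length, ?_⟩
    dsimp only
    rw [output_word, parikh_toList_of_unit_pow, eq_mul_two_pow_of_tests h₁ h₂, one_mul]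
  · rintro ⟨n, rfl⟩
    obtain ⟨h₁, h₂⟩ := tests_doubling 1 n
    rw [one_mul] at h₁ h₂
    refine ⟨_, ⟨word (doubling 1 n) (2 ^ n) (2 ^ n) (n + 1), ⟨?_, ?_⟩, rfl⟩, ?_⟩
    · obtain ⟨k, hk⟩ := Nat.exists_eq_add_one.2 (Nat.two_pow_pos n)
      rw [hk]
      exact word_mem_accepts _ _ _ _
    · exact valence_word_eq_one_iff.2 ⟨h₁, h₂, by rw [length_doubling]⟩
    · dsimp only
      rw [output_word, parikh_toList_of_unit_pow]

/-- `VA (F₂ × F₂)` contains a language with non-semilinear Parikh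
image, where `F₂` is the free group on two generators. -/
theorem stmt13 :
    ∃ (X : Type) (_ : Fintype X) (L : Language X),
      VA (FreeGroup (Fin 2) × FreeGroup (Fin 2)) L ∧ ¬ IsSemilinearSet (parikh '' L) :=
  ⟨Unit, inferInstance, twoPowLanguage,
    ⟨Letter, inferInstance, wordDFA.accepts, valence, output, ⟨Phase, inferInstance, wordDFA, rfl⟩,
      rfl⟩,
    parikh_image_twoPowLanguage ▸ not_isSemilinearSet_range_two_pow⟩

end Paper
end

section
/- Let X be a finite alphabet and k ≥ 1 a natural number. Every subset S of the multisets over X (functions X → ℕ) that is upward closed with respect to ≤_k (i.e. α ∈ S, α ≤ β pointwise, and α ≡ β (mod k) pointwise imply β ∈ S) is semilinear. -/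
/-! Split `S` according to the residues modulo `k` of the coordinates. On one residue class
`≤ₖ` is just the pointwise order, so by Dickson's lemma the class has finitely many minimal
elements of `S`, and the part of `S` in that class is the union of the cones `μ + k • ℕ^X` over
these minimal elements `μ`. -/

namespace Paper

section

variable {X : Type}

lemma isLinearSet_of_fintype {ι : Type*} [Fintype ι] (α₀ : X → ℕ) (α : ι → X → ℕ) :
    IsLinearSet {β | ∃ m : ι → ℕ, β = α₀ + ∑ i, m i • α i} := by
  let e := Fintype.equivFin ι
  refine ⟨α₀, Fintype.card ι, α ∘ e.symm, Set.ext fun β => ⟨?_, ?_⟩⟩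
  · rintro ⟨m, rfl⟩
    exact ⟨m ∘ e.symm, by rw [← e.symm.sum_comp (fun i => m i • α i)]; rfl⟩
  · rintro ⟨m, rfl⟩
    exact ⟨m ∘ e, by rw [← e.sum_comp]; simp⟩

lemma isLinearSet_add_smul [Fintype X] (α₀ : X → ℕ) (k : ℕ) :
    IsLinearSet {β | ∃ δ : X → ℕ, β = α₀ + k • δ} := by
  classical
  have hsum (δ : X → ℕ) : ∑ x, δ x • k • Pi.single x 1 = k • δ := by
    ext y
    simp [Finset.sum_apply, Pi.single_apply, mul_comm]
  have h := isLinearSet_of_fintype α₀ fun x => k • Pi.single x 1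
  simp_rw [hsum] at h
  exact h

lemma IsLinearSet.isSemilinearSet {S : Set (X → ℕ)} (h : IsLinearSet S) : IsSemilinearSet S :=
  ⟨1, fun _ => S, fun _ => h, (Set.iUnion_const S).symm⟩

lemma IsSemilinearSet.iUnion {ι : Type*} [Finite ι] {T : ι → Set (X → ℕ)}
    (h : ∀ i, IsSemilinearSet (T i)) : IsSemilinearSet (⋃ i, T i) := by
  choose n U hU hT using h
  have := Fintype.ofFinite ι
  let e := Fintype.equivFin (Σ i, Fin (n i))
  refine ⟨_, fun j => U (e.symm j).1 (e.symm j).2, fun j => hU _ _, ?_⟩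
  rw [e.symm.surjective.iUnion_comp (fun p => U p.1 p.2), Set.iUnion_sigma]
  simp_rw [hT]

lemma IsSemilinearSet.biUnion {ι : Type*} {s : Set ι} (hs : s.Finite) {T : ι → Set (X → ℕ)}
    (h : ∀ i ∈ s, IsSemilinearSet (T i)) : IsSemilinearSet (⋃ i ∈ s, T i) := by
  have := hs.to_subtype
  rw [Set.biUnion_eq_iUnion]
  exact .iUnion fun i => h i i.2

lemma finite_setOf_minimal {α : Type*} [PartialOrder α] [WellQuasiOrderedLE α] (P : α → Prop) :
    {x | Minimal P x}.Finite :=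
  WellQuasiOrderedLE.finite_of_isAntichain (setOfPred_minimal_antichain P)

lemma eq_iUnion_minimal_add_smul [Fintype X] {k : ℕ} (hk : 1 ≤ k) {S : Set (X → ℕ)}
    (hS : ∀ α ∈ S, ∀ β : X → ℕ,
      (∀ x, α x ≤ β x) → (∀ x, α x ≡ β x [MOD k]) → β ∈ S) :
    S = ⋃ ρ : X → Fin k, ⋃ μ ∈ {μ | Minimal (· ∈ {γ ∈ S | ∀ x, γ x ≡ ρ x [MOD k]}) μ},
      {β | ∃ δ : X → ℕ, β = μ + k • δ} := by
  ext β
  simp only [Set.mem_iUnion, Set.mem_ofPred_eq, exists_prop]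
  constructor
  · intro hβ
    let ρ : X → Fin k := fun x => ⟨β x % k, Nat.mod_lt _ hk⟩
    obtain ⟨μ, hμβ, hμ⟩ := (Set.isPWO_of_wellQuasiOrderedLE
      {γ ∈ S | ∀ x, γ x ≡ ρ x [MOD k]}).exists_le_minimal
        (a := β) ⟨hβ, fun x => (Nat.mod_modEq _ _).symm⟩
    have hdvd (x : X) : k ∣ β x - μ x :=
      (Nat.modEq_iff_dvd' (hμβ x)).1 ((hμ.1.2 x).trans (Nat.mod_modEq _ _))
    refine ⟨ρ, μ, hμ, fun x => (β x - μ x) / k, funext fun x => ?_⟩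
    simp [Nat.mul_div_cancel' (hdvd x), Nat.add_sub_cancel' (hμβ x)]
  · rintro ⟨ρ, μ, hμ, δ, rfl⟩
    exact hS μ hμ.1.1 _ (fun x => Nat.le_add_right _ _)
      fun x => (Nat.add_mul_mod_self_left _ _ _).symm

end

/-- For a finite alphabet `X` and `k ≥ 1`, every subset of the multisets
over `X` that is upward closed with respect to `≤ₖ` is semilinear. -/
theorem stmt16 (X : Type) [Fintype X] (k : ℕ) (hk : 1 ≤ k) (S : Set (X → ℕ))
    (hS : ∀ α ∈ S, ∀ β : X → ℕ,
      (∀ x, α x ≤ β x) → (∀ x, α x ≡ β x [MOD k]) → β ∈ S) :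
    IsSemilinearSet S := by
  rw [eq_iUnion_minimal_add_smul hk hS]
  exact .iUnion fun ρ => .biUnion (finite_setOf_minimal _) fun μ _ =>
    (isLinearSet_add_smul μ k).isSemilinearSet

end Paper
end

section
/- Let G be a torsion group, i.e. a group in which every element has finite order. Then for every finite alphabet X, every language L ⊆ X* with L ∈ VA(G) has semilinear Parikh image Ψ(L). -/
/-!
Let `R` be recognised by a DFA `M` and record, for every accepted `w` with `φ w = 1`, the vector
counting how often `w` uses each transition of `M` (transitions rather than letters, because
they show which states a run visits). Every run splits into a run of length at most `|σ|` plus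
short loops, so these vectors are `c + ∑ mᵢ vᵢ` for finitely many `c` and loop vectors `vᵢ`.
A loop `z` based at a state visited by `w` can be inserted `orderOf (φ z)` more times without
leaving the set, as `G` is torsion. Recording each `mᵢ` by a bounded residue and a quotient
modulo `orderOf`, the admissible quotients form an upper set in `ℕ^ι`, which is semilinear by
Dickson's lemma. The Parikh image of `L` is the image of this semilinear set under an additive
map.
-/

namespace Paper

theorem parikh_append_s17 {α : Type} (u v : List α) : parikh (u ++ v) = parikh u + parikh v := by
  funext a
  simp [parikh, List.count_append]

theorem parikh_pos_iff_mem {α : Type} {a : α} {l : List α} : 0 < parikh l a ↔ a ∈ l := by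
  classical
  exact List.count_pos_iff

theorem parikh_flatMap {α β : Type} [Fintype α] (l : List α) (g : α → List β) :
    parikh (l.flatMap g) = ∑ a, parikh l a • parikh (g a) := by
  classical
  induction l with
  | nil => funext b; simp [parikh]
  | cons a l ih =>
    rw [List.flatMap_cons, parikh_append_s17, ih, ← List.singleton_append, parikh_append_s17]
    simp [add_smul, Finset.sum_add_distrib, parikh, List.count_singleton, add_comm]

end Paper

section Pumping

open scoped Pointwise

variable {ι M : Type*} [AddCommMonoid M] [PartialOrder M] [CanonicallyOrderedAdd M]

theorem IsUpperSet.isSemilinearSet [Finite ι] {U : Set (ι → ℕ)} (hU : IsUpperSet U) :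
    IsSemilinearSet U := by
  have hU_eq : U = ⋃ x ∈ {x | Minimal (· ∈ U) x}, x +ᵥ (Set.univ : Set (ι → ℕ)) := by
    ext v
    simp only [Set.mem_iUnion, Set.mem_ofPred_eq, Set.mem_vadd_set, Set.mem_univ, true_and,
      vadd_eq_add, exists_prop]
    constructor
    · intro hv
      obtain ⟨x, hxv, hx⟩ := exists_minimal_le_of_wellFoundedLT _ v hv
      exact ⟨x, hx, v - x, add_tsub_cancel_of_le hxv⟩
    · rintro ⟨x, hx, c, rfl⟩
      exact hU le_self_add hx.prop
  rw [hU_eq]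
  exact .biUnion (WellQuasiOrderedLE.finite_of_isAntichain (setOfPred_minimal_antichain _))
    fun x _ => .vadd x .univ

theorem isUpperSet_setOf_add_sum_nsmul_mem [Fintype ι] {S : Set M} (b : M) (w : ι → M)
    (hw : ∀ i, ∀ s ∈ S, b ≤ s → s + w i ∈ S) :
    IsUpperSet {k : ι → ℕ | b + ∑ i, k i • w i ∈ S} := by
  let P : AddSubmonoid M :=
    { carrier := {t | ∀ s ∈ S, b ≤ s → s + t ∈ S}
      zero_mem' := fun s hs _ => by simpa using hs
      add_mem' := fun ht₁ ht₂ s hs hbs => by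
        rw [← add_assoc]
        exact ht₂ _ (ht₁ s hs hbs) (hbs.trans le_self_add) }
  intro k k' hkk' hk
  have hstep : ∑ i, (k' i - k i) • w i ∈ P :=
    P.sum_mem fun i _ => P.nsmul_mem (hw i) _
  have hsplit : b + ∑ i, k' i • w i = (b + ∑ i, k i • w i) + ∑ i, (k' i - k i) • w i := by
    rw [add_assoc, ← Finset.sum_add_distrib]
    congr 1
    refine Finset.sum_congr rfl fun i _ => ?_
    rw [← add_smul, add_tsub_cancel_of_le (hkk' i)]
  simpa only [Set.mem_ofPred_eq, hsplit] using hstep _ hk le_self_add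

theorem isSemilinearSet_image_setOf_add_sum_nsmul_mem [Fintype ι] {S : Set M} (b : M)
    (w : ι → M) (hw : ∀ i, ∀ s ∈ S, b ≤ s → s + w i ∈ S) :
    IsSemilinearSet
      ((fun k : ι → ℕ => b + ∑ i, k i • w i) '' {k | b + ∑ i, k i • w i ∈ S}) := by
  convert ((isUpperSet_setOf_add_sum_nsmul_mem b w hw).isSemilinearSet.image
    (Fintype.linearCombination ℕ w)).vadd b using 1
  rw [← Set.image_vadd, Set.image_image]
  simp [Fintype.linearCombination_apply]

theorem Nat.exists_le_eq_add_mul (m : ℕ) {d : ℕ} (hd : 0 < d) :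
    ∃ r ≤ d, ∃ k, (r = 0 → m = 0) ∧ m = r + k * d := by
  rcases Nat.eq_zero_or_pos m with rfl | hm
  · exact ⟨0, Nat.zero_le _, 0, fun _ => rfl, by simp⟩
  · refine ⟨(m - 1) % d + 1, Nat.mod_lt _ hd, (m - 1) / d,
      fun h => absurd h (Nat.succ_ne_zero _), ?_⟩
    have := Nat.mod_add_div (m - 1) d
    rw [Nat.mul_comm] at this
    omega

/-- Writing each multiplicity as `mᵢ = ρᵢ + kᵢ dᵢ` with `0 < ρᵢ ≤ dᵢ` (or `ρᵢ = mᵢ = 0`), the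
vectors `vᵢ` with `ρᵢ ≠ 0` lie below every element of the stratum `(c, ρ)`, so there pumping
acts freely on `k`. -/
theorem isSemilinearSet_of_pump [IsOrderedAddMonoid M] [Fintype ι] {S C : Set M}
    (hC : C.Finite) (v : ι → M) (d : ι → ℕ) (hd : ∀ i, 0 < d i)
    (hcover : ∀ s ∈ S, ∃ c ∈ C, ∃ m : ι → ℕ, s = c + ∑ i, m i • v i)
    (hpump : ∀ s ∈ S, ∀ i, v i ≤ s → s + d i • v i ∈ S) :
    IsSemilinearSet S := by
  classical
  let w (ρ : ι → ℕ) (i : ι) : M := if ρ i = 0 then 0 else d i • v i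
  let f (c : M) (ρ k : ι → ℕ) : M := (c + ∑ i, ρ i • v i) + ∑ i, k i • w ρ i
  have hstratum (c : M) (ρ : ι → ℕ) : IsSemilinearSet (f c ρ '' {k | f c ρ k ∈ S}) := by
    refine isSemilinearSet_image_setOf_add_sum_nsmul_mem _ _ fun i s hs hbs => ?_
    by_cases hρ : ρ i = 0
    · simpa [w, hρ] using hs
    have hvs : v i ≤ s := calc
      v i = 1 • v i := (one_nsmul _).symm
      _ ≤ ρ i • v i := nsmul_le_nsmul_left zero_le (Nat.one_le_iff_ne_zero.2 hρ)
      _ ≤ ∑ j, ρ j • v j :=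
        Finset.single_le_sum (f := fun j => ρ j • v j) (fun _ _ => zero_le) (Finset.mem_univ i)
      _ ≤ c + ∑ j, ρ j • v j := le_add_self
      _ ≤ s := hbs
    simpa [w, hρ] using hpump s hs i hvs
  have hS : S = ⋃ p ∈ C ×ˢ Set.Iic d, f p.1 p.2 '' {k | f p.1 p.2 k ∈ S} := by
    refine Set.Subset.antisymm (fun s hs => ?_) ?_
    · obtain ⟨c, hc, m, rfl⟩ := hcover s hs
      choose ρ hρd k hρ hm using fun i => Nat.exists_le_eq_add_mul (m i) (hd i)
      have hf : f c ρ k = c + ∑ i, m i • v i := by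
        simp only [f, add_assoc, ← Finset.sum_add_distrib]
        congr 1
        refine Finset.sum_congr rfl fun i _ => ?_
        by_cases h0 : ρ i = 0
        · simp [w, h0, hρ i h0]
        · simp [w, h0, hm i, add_smul, mul_smul]
      exact Set.mem_biUnion (x := (c, ρ)) ⟨hc, hρd⟩ ⟨k, by simpa [hf] using hs, hf⟩
    · simp only [Set.iUnion_subset_iff]
      rintro p - _ ⟨k, hk, rfl⟩
      exact hk
  rw [hS]
  exact .biUnion (hC.prod (Set.finite_Iic d)) fun p _ => hstratum p.1 p.2

end Pumping

namespace DFA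

variable {α σ : Type} (M : DFA α σ)

def transitions : σ → List α → List (σ × α)
  | _, [] => []
  | s, a :: x => (s, a) :: transitions (M.step s a) x

noncomputable def transCount (s : σ) (x : List α) : σ × α → ℕ :=
  Paper.parikh (M.transitions s x)

theorem transitions_append (s : σ) (x y : List α) :
    M.transitions s (x ++ y) = M.transitions s x ++ M.transitions (M.evalFrom s x) y := by
  induction x generalizing s with
  | nil => rfl
  | cons a x ih => simp [transitions, ih, evalFrom_cons]

theorem map_snd_transitions (s : σ) (x : List α) : (M.transitions s x).map Prod.snd = x := by
  induction x generalizing s with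
  | nil => rfl
  | cons a x ih => simp [transitions, ih]

theorem transCount_append (s : σ) (x y : List α) :
    M.transCount s (x ++ y) = M.transCount s x + M.transCount (M.evalFrom s x) y := by
  simp [transCount, transitions_append, Paper.parikh_append_s17]

theorem evalFrom_flatten_replicate {s : σ} {z : List α} (hz : M.evalFrom s z = s) (n : ℕ) :
    M.evalFrom s (List.replicate n z).flatten = s := by
  induction n with
  | zero => rfl
  | succ n ih => rw [List.replicate_succ, List.flatten_cons, evalFrom_of_append, hz, ih]

theorem transCount_flatten_replicate {s : σ} {z : List α} (hz : M.evalFrom s z = s) (n : ℕ) :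
    M.transCount s (List.replicate n z).flatten = n • M.transCount s z := by
  induction n with
  | zero => funext; simp [transCount, transitions, Paper.parikh]
  | succ n ih =>
    rw [List.replicate_succ, List.flatten_cons, transCount_append, hz, ih, succ_nsmul']

theorem evalFrom_append_flatten_replicate_append {s q : σ} {u z y : List α}
    (hu : M.evalFrom s u = q) (hz : M.evalFrom q z = q) (n : ℕ) :
    M.evalFrom s (u ++ (List.replicate n z).flatten ++ y) = M.evalFrom s (u ++ y) := by
  rw [evalFrom_of_append, evalFrom_of_append, evalFrom_of_append, hu,
    M.evalFrom_flatten_replicate hz]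

theorem transCount_append_flatten_replicate_append {s q : σ} {u z y : List α}
    (hu : M.evalFrom s u = q) (hz : M.evalFrom q z = q) (n : ℕ) :
    M.transCount s (u ++ (List.replicate n z).flatten ++ y) =
      M.transCount s (u ++ y) + n • M.transCount q z := by
  simp only [transCount_append, evalFrom_of_append, hu, M.evalFrom_flatten_replicate hz,
    M.transCount_flatten_replicate hz]
  abel

theorem exists_eq_append_of_mem_transitions {s q : σ} {a : α} {x : List α}
    (h : (q, a) ∈ M.transitions s x) : ∃ u y, x = u ++ y ∧ M.evalFrom s u = q := by
  induction x generalizing s with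
  | nil => simp [transitions] at h
  | cons b x ih =>
    rcases List.mem_cons.1 h with h | h
    · obtain ⟨rfl, rfl⟩ := Prod.mk.inj h
      exact ⟨[], a :: x, rfl, rfl⟩
    · obtain ⟨u, y, rfl, hu⟩ := ih h
      exact ⟨b :: u, y, rfl, hu⟩

theorem exists_eq_append_of_transCount_le {s q : σ} {z x : List α} (hz : z ≠ [])
    (h : M.transCount q z ≤ M.transCount s x) : ∃ u y, x = u ++ y ∧ M.evalFrom s u = q := by
  obtain ⟨a, z, rfl⟩ := List.exists_cons_of_ne_nil hz
  refine M.exists_eq_append_of_mem_transitions (a := a) (Paper.parikh_pos_iff_mem.1 ?_)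
  exact (Paper.parikh_pos_iff_mem.2 List.mem_cons_self).trans_le (h (q, a))

def shortLoops [Fintype σ] : Set (σ × List α) :=
  {p | p.2 ≠ [] ∧ p.2.length ≤ Fintype.card σ ∧ M.evalFrom p.1 p.2 = p.1}

theorem finite_shortLoops [Finite α] [Fintype σ] : M.shortLoops.Finite :=
  (Set.finite_univ.prod (List.finite_length_le α _)).subset fun _ hp => ⟨trivial, hp.2.1⟩

noncomputable instance [Finite α] [Fintype σ] : Fintype M.shortLoops :=
  M.finite_shortLoops.fintype

theorem exists_transCount_eq_add_sum_shortLoops [Finite α] [Fintype σ] (s : σ) (x : List α) :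
    ∃ x₀ : List α, x₀.length ≤ Fintype.card σ ∧ ∃ m : M.shortLoops → ℕ,
      M.transCount s x = M.transCount s x₀ + ∑ l, m l • M.transCount l.1.1 l.1.2 := by
  classical
  induction hn : x.length using Nat.strong_induction_on generalizing x with
  | _ n ih =>
    by_cases hx : x.length < Fintype.card σ
    · exact ⟨x, hx.le, 0, by simp⟩
    obtain ⟨q, a, z, y, rfl, hlen, hz, ha, hloop, -⟩ :=
      M.evalFrom_split (s := s) (not_lt.1 hx) rfl
    obtain ⟨x₀, hx₀, m, hm⟩ := ih (a ++ y).length (by simp [← hn, List.length_pos_iff.2 hz])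
      (a ++ y) rfl
    let l : M.shortLoops := ⟨(q, z), hz, show z.length ≤ _ by omega, hloop⟩
    refine ⟨x₀, hx₀, m + Pi.single l 1, ?_⟩
    have hsplit := M.transCount_append_flatten_replicate_append (y := y) ha hloop 1
    rw [List.replicate_one, List.flatten_singleton, one_nsmul] at hsplit
    rw [hsplit, hm, add_assoc]
    simp [add_smul, Finset.sum_add_distrib, Pi.single_apply, ite_smul, l]

theorem isSemilinearSet_transCount_image [Finite α] [Fintype σ] {G : Type*} [Monoid G]
    (hG : IsMulTorsion G) (φ : FreeMonoid α →* G) :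
    IsSemilinearSet ((fun w : FreeMonoid α => M.transCount M.start w.toList) ''
      {w | w.toList ∈ M.accepts ∧ φ w = 1}) := by
  refine isSemilinearSet_of_pump
    ((List.finite_length_le α (Fintype.card σ)).image (M.transCount M.start))
    (fun l : M.shortLoops => M.transCount l.1.1 l.1.2)
    (fun l => orderOf (φ (FreeMonoid.ofList l.1.2))) (fun l => (hG _).orderOf_pos) ?_ ?_
  · rintro _ ⟨w, -, rfl⟩
    obtain ⟨x₀, hx₀, m, hm⟩ := M.exists_transCount_eq_add_sum_shortLoops M.start w.toList
    exact ⟨_, ⟨x₀, hx₀, rfl⟩, m, hm⟩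
  · rintro _ ⟨w, ⟨hacc, hone⟩, rfl⟩ ⟨⟨q, z⟩, hz, _, hloop⟩ hle
    obtain ⟨u, y, hw, hu⟩ := M.exists_eq_append_of_transCount_le hz hle
    set n := orderOf (φ (FreeMonoid.ofList z))
    refine ⟨FreeMonoid.ofList (u ++ (List.replicate n z).flatten ++ y), ⟨?_, ?_⟩, ?_⟩
    · rwa [FreeMonoid.toList_ofList, mem_accepts, eval,
        M.evalFrom_append_flatten_replicate_append hu hloop, ← eval, ← mem_accepts, ← hw]
    · rw [← FreeMonoid.ofList_toList w, hw] at hone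
      rwa [FreeMonoid.ofList_append, FreeMonoid.ofList_append, FreeMonoid.ofList_flatten,
        List.map_replicate, List.prod_replicate, map_mul, map_mul, map_pow, pow_orderOf_eq_one,
        mul_one, ← map_mul, ← FreeMonoid.ofList_append]
    · exact (M.transCount_append_flatten_replicate_append hu hloop n).trans (by dsimp only; rw [hw])

end DFA

namespace Paper

theorem isLinearSet_of_isLinearSet {X : Type} {S : Set (X → ℕ)} (h : _root_.IsLinearSet S) :
    IsLinearSet S := by
  obtain ⟨a, n, f, rfl⟩ := isLinearSet_iff_exists_fin_addMonoidHom.1 h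
  refine ⟨a, n, fun i => f fun j => if i = j then 1 else 0, Set.ext fun β => ?_⟩
  have hf (m : Fin n → ℕ) : f m = ∑ i, m i • f fun j => if i = j then 1 else 0 :=
    f.toNatLinearMap.pi_apply_eq_sum_univ m
  simp only [Set.mem_vadd_set, Set.mem_range, vadd_eq_add, Set.mem_ofPred_eq, ← hf]
  constructor
  · rintro ⟨_, ⟨m, rfl⟩, rfl⟩
    exact ⟨m, rfl⟩
  · rintro ⟨m, rfl⟩
    exact ⟨_, ⟨m, rfl⟩, rfl⟩

theorem isSemilinearSet_of_isSemilinearSet {X : Type} {S : Set (X → ℕ)}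
    (h : _root_.IsSemilinearSet S) : IsSemilinearSet S := by
  obtain ⟨F, hF, rfl⟩ := isSemilinearSet_iff.1 h
  refine ⟨F.card, fun i => F.equivFin.symm i,
    fun i => isLinearSet_of_isLinearSet (hF _ (F.equivFin.symm i).2), ?_⟩
  rw [Set.sUnion_eq_iUnion]
  exact (F.equivFin.symm.iSup_comp (g := fun t : F => (t : Set (X → ℕ)))).symm

theorem parikh_toList_eq_sum_transCount {X Y σ : Type} [Fintype Y] [Fintype σ]
    (h : FreeMonoid Y →* FreeMonoid X) (M : DFA Y σ) (s : σ) (w : FreeMonoid Y) :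
    parikh (h w).toList = ∑ p, M.transCount s w.toList p • parikh (h (.of p.2)).toList := by
  have hw : (h w).toList = w.toList.flatMap fun a => (h (.of a)).toList := by
    rw [← FreeMonoid.lift_restrict h, FreeMonoid.lift_apply, FreeMonoid.toList_prod,
      List.map_map, List.flatMap_def]
    rfl
  rw [hw]
  conv_lhs => rw [← M.map_snd_transitions s w.toList, List.flatMap_map, parikh_flatMap]
  rfl

theorem stmt17_general (G : Type*) [Group G] (hG : ∀ g : G, ∃ n : ℕ, 0 < n ∧ g ^ n = 1)
    (X : Type) (L : Language X) (hL : VA G L) :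
    LangSemilinear L := by
  obtain ⟨Y, _, _, φ, h, ⟨σ, _, M, rfl⟩, rfl⟩ := hL
  have hT : IsMulTorsion G := fun g => isOfFinOrder_iff_pow_eq_one.2 (hG g)
  let θ := Fintype.linearCombination ℕ fun p : σ × Y => parikh (h (.of p.2)).toList
  have hθ : (fun w => parikh (h w).toList) = θ ∘ fun w => M.transCount M.start w.toList :=
    funext fun w => by
      simp [θ, Fintype.linearCombination_apply, parikh_toList_eq_sum_transCount h M M.start w]
  unfold LangSemilinear
  rw [Set.image_image, hθ, Set.image_comp]
  exact isSemilinearSet_of_isSemilinearSet ((M.isSemilinearSet_transCount_image hT φ).image θ)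

/-- For every torsion group `G`, every language in `VA G` has a
semilinear Parikh image. -/
theorem stmt17 (G : Type*) [Group G] (hG : ∀ g : G, ∃ n : ℕ, 0 < n ∧ g ^ n = 1)
    (X : Type) [Fintype X] (L : Language X) (hL : VA G L) :
    LangSemilinear L :=
  stmt17_general G hG X L hL

end Paper
end
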